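/- arXiv:2101.11023 — 6 statements merged into one kernel-verified Lean document; each statement's English description precedes it below -/
import Mathlib

section
/- Let n be a positive integer, let p, q ∈ [0,1], and let K = (G, M, I) be a random formal context distributed according to κ_{n,p,q}. Then the expected number of formal concepts of K equals the sum, over all quadruples (a, b, c, d) of non-negative integers with a + b + c + d = n, of the terms C(n; a, b, c, d) · p^{a+c} (1−p)^{b+d} · q^{ab} (1 − q^a)^d (1 − q^b)^c, where C(n; a, b, c, d) = n!/(a! b! c! d!) is the multinomial coefficient. -/
open Finset

/-- For a formal context with object set `G ⊆ {1,…,n}`, attribute set `Gᶜ` and incidence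
relation `I ⊆ G × Gᶜ`: the set `A'` of attributes shared by all objects in `A`. -/
def extentDeriv (n : ℕ) (G : Finset (Fin n)) (I : Finset (Fin n × Fin n))
    (A : Finset (Fin n)) : Finset (Fin n) :=
  Gᶜ.filter fun m => ∀ g ∈ A, (g, m) ∈ I

/-- The set `B'` of objects having all attributes in `B`. -/
def intentDeriv (n : ℕ) (G : Finset (Fin n)) (I : Finset (Fin n × Fin n))
    (B : Finset (Fin n)) : Finset (Fin n) :=
  G.filter fun g => ∀ m ∈ B, (g, m) ∈ I

/-- `(A, B)` is a formal concept of the context `(G, Gᶜ, I)`. -/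
def IsConcept (n : ℕ) (G : Finset (Fin n)) (I : Finset (Fin n × Fin n))
    (A B : Finset (Fin n)) : Prop :=
  A ⊆ G ∧ B ⊆ Gᶜ ∧ extentDeriv n G I A = B ∧ intentDeriv n G I B = A

instance (n : ℕ) (G : Finset (Fin n)) (I : Finset (Fin n × Fin n)) (A B : Finset (Fin n)) :
    Decidable (IsConcept n G I A B) := by
  unfold IsConcept; infer_instance

/-- The number `|𝔅(K)|` of formal concepts of the context `K = (G, Gᶜ, I)`. -/
def numConcepts (n : ℕ) (G : Finset (Fin n)) (I : Finset (Fin n × Fin n)) : ℕ :=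
  (Finset.univ.filter fun AB : Finset (Fin n) × Finset (Fin n) =>
    IsConcept n G I AB.1 AB.2).card

/-- The probability `κ_{n,p,q}{(G, Gᶜ, I)}` of a single context. -/
noncomputable def kappa (n : ℕ) (p q : ℝ) (G : Finset (Fin n))
    (I : Finset (Fin n × Fin n)) : ℝ :=
  p ^ G.card * (1 - p) ^ Gᶜ.card * q ^ I.card * (1 - q) ^ ((G ×ˢ Gᶜ).card - I.card)

/-- The expected number of formal concepts `E[|𝔅(K)|]` for `K ~ κ_{n,p,q}`:
the sum over the finite sample space `Ω_n` (all contexts `(G, Gᶜ, I)` with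
`I ⊆ G × Gᶜ`) of the number of concepts weighted by `κ_{n,p,q}`. -/
noncomputable def expectedConcepts (n : ℕ) (p q : ℝ) : ℝ :=
  ∑ G : Finset (Fin n), ∑ I ∈ (G ×ˢ Gᶜ).powerset,
    (numConcepts n G I : ℝ) * kappa n p q G I


open scoped Classical
set_option linter.unusedSectionVars false
set_option linter.unusedVariables false
set_option linter.unnecessarySeqFocus false
set_option maxHeartbeats 1000000

section CsumMachinery

variable {α : Type*} [DecidableEq α]

noncomputable def csum (q : ℝ) (S : Finset α) (E : Finset α → Prop) : ℝ :=
  ∑ I ∈ S.powerset, if E I then q ^ I.card * (1 - q) ^ (S.card - I.card) else 0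

lemma csum_congr (q : ℝ) (S : Finset α) {E E' : Finset α → Prop}
    (h : ∀ I, I ⊆ S → (E I ↔ E' I)) : csum q S E = csum q S E' := by
  unfold csum
  refine Finset.sum_congr rfl fun I hI => ?_
  rw [Finset.mem_powerset] at hI
  rw [if_congr (h I hI) rfl rfl]

lemma bern_total (q : ℝ) (S : Finset α) :
    ∑ I ∈ S.powerset, q ^ I.card * (1 - q) ^ (S.card - I.card) = 1 := by
  have h := Finset.prod_add (fun _ : α => q) (fun _ : α => 1 - q) S
  simp only [Finset.prod_const] at h
  have e : ∑ I ∈ S.powerset, q ^ I.card * (1 - q) ^ (S.card - I.card)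
      = ∑ I ∈ S.powerset, q ^ I.card * (1 - q) ^ (S \ I).card := by
    refine Finset.sum_congr rfl fun I hI => ?_
    rw [Finset.mem_powerset] at hI
    rw [Finset.card_sdiff_of_subset hI]
  rw [e, ← h]
  norm_num

lemma bern_single (q : ℝ) (S : Finset α) :
    ∑ I ∈ S.powerset, (if I = S then q ^ I.card * (1 - q) ^ (S.card - I.card) else 0)
      = q ^ S.card := by
  rw [Finset.sum_eq_single S]
  · simp
  · intro b _ hb; rw [if_neg hb]
  · intro h; exact absurd (Finset.mem_powerset_self S) h

lemma csum_true (q : ℝ) (S : Finset α) : csum q S (fun _ => True) = 1 := by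
  unfold csum
  simp only [if_true]
  exact bern_total q S

lemma csum_eq_full (q : ℝ) (S : Finset α) : csum q S (fun J => J = S) = q ^ S.card := by
  unfold csum
  rw [← bern_single q S]
  exact Finset.sum_congr rfl fun I hI => by by_cases h : I = S <;> simp [h]

lemma csum_ne_full (q : ℝ) (S : Finset α) : csum q S (fun J => J ≠ S) = 1 - q ^ S.card := by
  unfold csum
  rw [show (1 - q ^ S.card) =
      (∑ I ∈ S.powerset, q ^ I.card * (1 - q) ^ (S.card - I.card))
        - (∑ I ∈ S.powerset, if I = S then q ^ I.card * (1 - q) ^ (S.card - I.card) else 0)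
    from by rw [bern_total, bern_single], ← Finset.sum_sub_distrib]
  exact Finset.sum_congr rfl fun I hI => by by_cases h : I = S <;> simp [h]

lemma sum_powerset_union_disjoint {β : Type*} [AddCommMonoid β] {s t : Finset α}
    (h : Disjoint s t) (f : Finset α → β) :
    ∑ I ∈ (s ∪ t).powerset, f I = ∑ I₁ ∈ s.powerset, ∑ I₂ ∈ t.powerset, f (I₁ ∪ I₂) := by
  refine Eq.trans ?_ (Finset.sum_product s.powerset t.powerset (fun P => f (P.1 ∪ P.2)))
  refine Finset.sum_nbij' (fun I => (I ∩ s, I ∩ t)) (fun P => P.1 ∪ P.2) ?_ ?_ ?_ ?_ ?_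
  · intro I hI
    simp only [Finset.mem_product, Finset.mem_powerset]
    exact ⟨Finset.inter_subset_right, Finset.inter_subset_right⟩
  · intro P hP
    simp only [Finset.mem_product, Finset.mem_powerset] at hP
    rw [Finset.mem_powerset]
    exact Finset.union_subset_union hP.1 hP.2
  · intro I hI
    rw [Finset.mem_powerset] at hI
    simp only
    rw [← Finset.inter_union_distrib_left, Finset.inter_eq_left.2 hI]
  · intro P hP
    simp only [Finset.mem_product, Finset.mem_powerset] at hP
    have h1 : P.1 ∩ s = P.1 := Finset.inter_eq_left.2 hP.1
    have h2 : P.2 ∩ t = P.2 := Finset.inter_eq_left.2 hP.2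
    have h3 : P.2 ∩ s = ∅ := Finset.disjoint_iff_inter_eq_empty.1 (h.symm.mono_left hP.2)
    have h4 : P.1 ∩ t = ∅ := Finset.disjoint_iff_inter_eq_empty.1 (h.mono_left hP.1)
    ext1 <;> simp only [Finset.union_inter_distrib_right, h1, h2, h3, h4,
      Finset.union_empty, Finset.empty_union]
  · intro I hI
    rw [Finset.mem_powerset] at hI
    simp only
    rw [← Finset.inter_union_distrib_left, Finset.inter_eq_left.2 hI]

lemma csum_mul (q : ℝ) {s t : Finset α} (h : Disjoint s t)
    (E₁ E₂ : Finset α → Prop) :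
    csum q (s ∪ t) (fun I => E₁ (I ∩ s) ∧ E₂ (I ∩ t)) = csum q s E₁ * csum q t E₂ := by
  unfold csum
  rw [sum_powerset_union_disjoint h, Finset.sum_mul_sum]
  refine Finset.sum_congr rfl fun I₁ hI₁ => Finset.sum_congr rfl fun I₂ hI₂ => ?_
  rw [Finset.mem_powerset] at hI₁ hI₂
  have hd : Disjoint I₁ I₂ := (h.mono_left hI₁).mono_right hI₂
  have h1 : (I₁ ∪ I₂) ∩ s = I₁ := by
    rw [Finset.union_inter_distrib_right, Finset.inter_eq_left.2 hI₁,
      Finset.disjoint_iff_inter_eq_empty.1 (h.symm.mono_left hI₂), Finset.union_empty]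
  have h2 : (I₁ ∪ I₂) ∩ t = I₂ := by
    rw [Finset.union_inter_distrib_right, Finset.inter_eq_left.2 hI₂,
      Finset.disjoint_iff_inter_eq_empty.1 (h.mono_left hI₁), Finset.empty_union]
  have hcard : (I₁ ∪ I₂).card = I₁.card + I₂.card := Finset.card_union_of_disjoint hd
  have hcardst : (s ∪ t).card = s.card + t.card := Finset.card_union_of_disjoint h
  have hle1 : I₁.card ≤ s.card := Finset.card_le_card hI₁
  have hle2 : I₂.card ≤ t.card := Finset.card_le_card hI₂
  have hexp : (s ∪ t).card - (I₁ ∪ I₂).card = (s.card - I₁.card) + (t.card - I₂.card) := by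
    omega
  have hexp2 : s.card + t.card - (I₁.card + I₂.card) = (s.card - I₁.card) + (t.card - I₂.card) := by
    omega
  simp only [h1, h2, hcard, hcardst, hexp, hexp2]
  by_cases e1 : E₁ I₁ <;> by_cases e2 : E₂ I₂ <;> simp [e1, e2, pow_add] <;> ring


lemma csum_partition {ι : Type*} [DecidableEq ι] (q : ℝ) (J : Finset ι) (S : ι → Finset α)
    (hd : ∀ i ∈ J, ∀ j ∈ J, i ≠ j → Disjoint (S i) (S j)) (E : ι → Finset α → Prop) :
    csum q (J.biUnion S) (fun I => ∀ i ∈ J, E i (I ∩ S i)) = ∏ i ∈ J, csum q (S i) (E i) := by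
  induction J using Finset.induction_on with
  | empty => simp [csum]
  | @insert a J' ha IH =>
    have hd' : ∀ i ∈ J', ∀ j ∈ J', i ≠ j → Disjoint (S i) (S j) := fun i hi j hj =>
      hd i (Finset.mem_insert_of_mem hi) j (Finset.mem_insert_of_mem hj)
    have hdisj : Disjoint (S a) (J'.biUnion S) := by
      rw [Finset.disjoint_biUnion_right]
      intro i hi
      exact hd a (Finset.mem_insert_self a J') i (Finset.mem_insert_of_mem hi)
        (fun h => ha (h ▸ hi))
    rw [Finset.biUnion_insert]
    have step : csum q (S a ∪ J'.biUnion S) (fun I => ∀ i ∈ insert a J', E i (I ∩ S i))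
        = csum q (S a ∪ J'.biUnion S)
          (fun I => E a (I ∩ S a) ∧ (fun K => ∀ i ∈ J', E i (K ∩ S i)) (I ∩ J'.biUnion S)) := by
      refine csum_congr q _ fun I _ => ?_
      simp only [Finset.forall_mem_insert]
      constructor
      · rintro ⟨h1, h2⟩
        refine ⟨h1, fun i hi => ?_⟩
        rw [Finset.inter_assoc, Finset.inter_eq_right.2 (Finset.subset_biUnion_of_mem S hi)]
        exact h2 i hi
      · rintro ⟨h1, h2⟩
        refine ⟨h1, fun i hi => ?_⟩
        have := h2 i hi
        rwa [Finset.inter_assoc, Finset.inter_eq_right.2 (Finset.subset_biUnion_of_mem S hi)]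
          at this
    rw [step, csum_mul q hdisj (E a) (fun K => ∀ i ∈ J', E i (K ∩ S i)), IH hd',
      Finset.prod_insert ha]

lemma product_biUnion_right (A t : Finset α) :
    A ×ˢ t = t.biUnion (fun m => A ×ˢ ({m} : Finset α)) := by
  ext ⟨g, m⟩
  simp [Finset.mem_product, Finset.mem_biUnion, and_comm]

lemma product_biUnion_left (s B : Finset α) :
    s ×ˢ B = s.biUnion (fun g => ({g} : Finset α) ×ˢ B) := by
  ext ⟨g, m⟩
  simp [Finset.mem_product, Finset.mem_biUnion]


end CsumMachinery

lemma inter_full_iff {n : ℕ} (I : Finset (Fin n × Fin n)) (s t : Finset (Fin n)) :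
    I ∩ (s ×ˢ t) = s ×ˢ t ↔ ∀ g ∈ s, ∀ m ∈ t, (g, m) ∈ I := by
  rw [Finset.inter_eq_right]
  constructor
  · intro h g hg m hm
    exact h (Finset.mem_product.2 ⟨hg, hm⟩)
  · rintro h ⟨g, m⟩ hx
    rw [Finset.mem_product] at hx
    exact h g hx.1 m hx.2

lemma concept_iff {n : ℕ} {G A B : Finset (Fin n)} (hA : A ⊆ G) (hB : B ⊆ Gᶜ)
    (I : Finset (Fin n × Fin n)) :
    IsConcept n G I A B ↔
      (I ∩ (A ×ˢ B) = A ×ˢ B)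
        ∧ (∀ m ∈ Gᶜ \ B, I ∩ (A ×ˢ ({m} : Finset (Fin n))) ≠ A ×ˢ ({m} : Finset (Fin n)))
        ∧ (∀ g ∈ G \ A, I ∩ (({g} : Finset (Fin n)) ×ˢ B) ≠ ({g} : Finset (Fin n)) ×ˢ B) := by
  constructor
  · rintro ⟨-, -, hext, hint⟩
    refine ⟨?_, ?_, ?_⟩
    · rw [inter_full_iff]
      intro g hg m hm
      have : m ∈ extentDeriv n G I A := hext.symm ▸ hm
      rw [extentDeriv, Finset.mem_filter] at this
      exact this.2 g hg
    · intro m hm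
      rw [Ne, inter_full_iff]
      intro hcon
      have : m ∈ extentDeriv n G I A := by
        rw [extentDeriv, Finset.mem_filter]
        exact ⟨(Finset.mem_sdiff.1 hm).1,
          fun g hg => hcon g hg m (Finset.mem_singleton_self m)⟩
      rw [hext] at this
      exact (Finset.mem_sdiff.1 hm).2 this
    · intro g hg
      rw [Ne, inter_full_iff]
      intro hcon
      have : g ∈ intentDeriv n G I B := by
        rw [intentDeriv, Finset.mem_filter]
        exact ⟨(Finset.mem_sdiff.1 hg).1,
          fun m hm => hcon g (Finset.mem_singleton_self g) m hm⟩
      rw [hint] at this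
      exact (Finset.mem_sdiff.1 hg).2 this
  · rintro ⟨h1, h2, h3⟩
    rw [inter_full_iff] at h1
    refine ⟨hA, hB, ?_, ?_⟩
    · ext m
      rw [extentDeriv, Finset.mem_filter]
      constructor
      · rintro ⟨hmGc, hP⟩
        by_contra hmB
        refine h2 m (Finset.mem_sdiff.2 ⟨hmGc, hmB⟩) ?_
        rw [inter_full_iff]
        intro g hg m' hm'
        rw [Finset.mem_singleton.1 hm']
        exact hP g hg
      · intro hmB
        exact ⟨hB hmB, fun g hg => h1 g hg m hmB⟩
    · ext g
      rw [intentDeriv, Finset.mem_filter]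
      constructor
      · rintro ⟨hgG, hQ⟩
        by_contra hgA
        refine h3 g (Finset.mem_sdiff.2 ⟨hgG, hgA⟩) ?_
        rw [inter_full_iff]
        intro g' hg' m hm
        rw [Finset.mem_singleton.1 hg']
        exact hQ m hm
      · intro hgA
        exact ⟨hA hgA, fun m hm => h1 g hgA m hm⟩


lemma concept_prob {n : ℕ} {G A B : Finset (Fin n)} (q : ℝ) (hA : A ⊆ G) (hB : B ⊆ Gᶜ) :
    csum q (G ×ˢ Gᶜ) (fun I => IsConcept n G I A B)
      = q ^ (A.card * B.card) * (1 - q ^ A.card) ^ (Gᶜ.card - B.card)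
          * (1 - q ^ B.card) ^ (G.card - A.card) := by
  set L := A ×ˢ Gᶜ with hL
  set R := (G \ A) ×ˢ Gᶜ with hR
  set U1 := A ×ˢ B with hU1
  set U2 := A ×ˢ (Gᶜ \ B) with hU2
  set U3 := (G \ A) ×ˢ B with hU3
  set U4 := (G \ A) ×ˢ (Gᶜ \ B) with hU4
  have hGsplit : G ×ˢ Gᶜ = L ∪ R := by
    rw [hL, hR, ← Finset.union_product, Finset.union_sdiff_of_subset hA]
  have hLsplit : L = U1 ∪ U2 := by
    rw [hL, hU1, hU2, ← Finset.product_union, Finset.union_sdiff_of_subset hB]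
  have hRsplit : R = U3 ∪ U4 := by
    rw [hR, hU3, hU4, ← Finset.product_union, Finset.union_sdiff_of_subset hB]
  have hdLR : Disjoint L R := Finset.disjoint_product.2 (Or.inl Finset.disjoint_sdiff)
  have hd12 : Disjoint U1 U2 := Finset.disjoint_product.2 (Or.inr Finset.disjoint_sdiff)
  have hd34 : Disjoint U3 U4 := Finset.disjoint_product.2 (Or.inr Finset.disjoint_sdiff)
  have hinter : ∀ (I X Y : Finset (Fin n × Fin n)), X ⊆ Y → (I ∩ Y) ∩ X = I ∩ X := by
    intro I X Y hXY
    rw [Finset.inter_assoc, Finset.inter_eq_right.2 hXY]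
  have hU1L : U1 ⊆ L := Finset.product_subset_product (subset_refl A) hB
  have hcolL : ∀ m ∈ Gᶜ \ B, A ×ˢ ({m} : Finset (Fin n)) ⊆ L := fun m hm =>
    Finset.product_subset_product (subset_refl A)
      (Finset.singleton_subset_iff.2 (Finset.mem_sdiff.1 hm).1)
  have hcolU2 : ∀ m ∈ Gᶜ \ B, A ×ˢ ({m} : Finset (Fin n)) ⊆ U2 := fun m hm =>
    Finset.product_subset_product (subset_refl A) (Finset.singleton_subset_iff.2 hm)
  have hrowR : ∀ g ∈ G \ A, ({g} : Finset (Fin n)) ×ˢ B ⊆ R := fun g hg =>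
    Finset.product_subset_product (Finset.singleton_subset_iff.2 hg) hB
  have hrowU3 : ∀ g ∈ G \ A, ({g} : Finset (Fin n)) ×ˢ B ⊆ U3 := fun g hg =>
    Finset.product_subset_product (Finset.singleton_subset_iff.2 hg) (subset_refl B)
  -- Step 1: split into L and R
  rw [hGsplit]
  have step1 : csum q (L ∪ R) (fun I => IsConcept n G I A B)
      = csum q (L ∪ R) (fun I =>
          (fun K => (K ∩ U1 = U1) ∧ ∀ m ∈ Gᶜ \ B,
            K ∩ (A ×ˢ ({m} : Finset (Fin n))) ≠ A ×ˢ ({m} : Finset (Fin n))) (I ∩ L)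
          ∧ (fun K => ∀ g ∈ G \ A,
            K ∩ (({g} : Finset (Fin n)) ×ˢ B) ≠ ({g} : Finset (Fin n)) ×ˢ B) (I ∩ R)) := by
    refine csum_congr q _ fun I _ => ?_
    rw [concept_iff hA hB I]
    simp only
    rw [hinter I U1 L hU1L]
    constructor
    · rintro ⟨h1, h2, h3⟩
      exact ⟨⟨h1, fun m hm => by rw [hinter I _ L (hcolL m hm)]; exact h2 m hm⟩,
        fun g hg => by rw [hinter I _ R (hrowR g hg)]; exact h3 g hg⟩
    · rintro ⟨⟨h1, h2⟩, h3⟩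
      exact ⟨h1,
        fun m hm => by have := h2 m hm; rwa [hinter I _ L (hcolL m hm)] at this,
        fun g hg => by have := h3 g hg; rwa [hinter I _ R (hrowR g hg)] at this⟩
  rw [step1, csum_mul q hdLR
    (fun K => (K ∩ U1 = U1) ∧ ∀ m ∈ Gᶜ \ B,
      K ∩ (A ×ˢ ({m} : Finset (Fin n))) ≠ A ×ˢ ({m} : Finset (Fin n)))
    (fun K => ∀ g ∈ G \ A,
      K ∩ (({g} : Finset (Fin n)) ×ˢ B) ≠ ({g} : Finset (Fin n)) ×ˢ B)]
  -- Step 2: the L part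
  have stepL : csum q L (fun K => (K ∩ U1 = U1) ∧ ∀ m ∈ Gᶜ \ B,
        K ∩ (A ×ˢ ({m} : Finset (Fin n))) ≠ A ×ˢ ({m} : Finset (Fin n)))
      = q ^ (A.card * B.card) * (1 - q ^ A.card) ^ (Gᶜ.card - B.card) := by
    rw [hLsplit]
    have e : csum q (U1 ∪ U2) (fun K => (K ∩ U1 = U1) ∧ ∀ m ∈ Gᶜ \ B,
          K ∩ (A ×ˢ ({m} : Finset (Fin n))) ≠ A ×ˢ ({m} : Finset (Fin n)))
        = csum q (U1 ∪ U2) (fun K =>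
            (fun X => X = U1) (K ∩ U1)
            ∧ (fun Y => ∀ m ∈ Gᶜ \ B,
                Y ∩ (A ×ˢ ({m} : Finset (Fin n))) ≠ A ×ˢ ({m} : Finset (Fin n))) (K ∩ U2)) := by
      refine csum_congr q _ fun K _ => ?_
      simp only
      constructor
      · rintro ⟨h1, h2⟩
        exact ⟨h1, fun m hm => by rw [hinter K _ U2 (hcolU2 m hm)]; exact h2 m hm⟩
      · rintro ⟨h1, h2⟩
        exact ⟨h1, fun m hm => by
          have := h2 m hm; rwa [hinter K _ U2 (hcolU2 m hm)] at this⟩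
    rw [e, csum_mul q hd12 (fun X => X = U1)
      (fun Y => ∀ m ∈ Gᶜ \ B,
        Y ∩ (A ×ˢ ({m} : Finset (Fin n))) ≠ A ×ˢ ({m} : Finset (Fin n))),
      csum_eq_full, hU1, Finset.card_product]
    congr 1
    have hdcols : ∀ i ∈ Gᶜ \ B, ∀ j ∈ Gᶜ \ B, i ≠ j →
        Disjoint (A ×ˢ ({i} : Finset (Fin n))) (A ×ˢ ({j} : Finset (Fin n))) :=
      fun i _ j _ hij => Finset.disjoint_product.2 (Or.inr (Finset.disjoint_singleton.2 hij))
    have e2 : U2 = (Gᶜ \ B).biUnion (fun m => A ×ˢ ({m} : Finset (Fin n))) :=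
      product_biUnion_right A (Gᶜ \ B)
    rw [e2, csum_partition q (Gᶜ \ B) _ hdcols (fun m X => X ≠ A ×ˢ ({m} : Finset (Fin n)))]
    have : ∀ m ∈ Gᶜ \ B,
        csum q (A ×ˢ ({m} : Finset (Fin n))) (fun X => X ≠ A ×ˢ ({m} : Finset (Fin n)))
          = 1 - q ^ A.card := by
      intro m _
      rw [csum_ne_full, Finset.card_product, Finset.card_singleton, mul_one]
    rw [Finset.prod_congr rfl this, Finset.prod_const, Finset.card_sdiff_of_subset hB]
  -- Step 3: the R part
  have stepR : csum q R (fun K => ∀ g ∈ G \ A,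
        K ∩ (({g} : Finset (Fin n)) ×ˢ B) ≠ ({g} : Finset (Fin n)) ×ˢ B)
      = (1 - q ^ B.card) ^ (G.card - A.card) := by
    rw [hRsplit]
    have e : csum q (U3 ∪ U4) (fun K => ∀ g ∈ G \ A,
          K ∩ (({g} : Finset (Fin n)) ×ˢ B) ≠ ({g} : Finset (Fin n)) ×ˢ B)
        = csum q (U3 ∪ U4) (fun K =>
            (fun X => ∀ g ∈ G \ A,
              X ∩ (({g} : Finset (Fin n)) ×ˢ B) ≠ ({g} : Finset (Fin n)) ×ˢ B) (K ∩ U3)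
            ∧ (fun _ => True) (K ∩ U4)) := by
      refine csum_congr q _ fun K _ => ?_
      simp only [and_true]
      constructor
      · intro h g hg
        rw [hinter K _ U3 (hrowU3 g hg)]; exact h g hg
      · intro h g hg
        have := h g hg; rwa [hinter K _ U3 (hrowU3 g hg)] at this
    rw [e, csum_mul q hd34
      (fun X => ∀ g ∈ G \ A,
        X ∩ (({g} : Finset (Fin n)) ×ˢ B) ≠ ({g} : Finset (Fin n)) ×ˢ B)
      (fun _ => True), csum_true, mul_one]
    have hdrows : ∀ i ∈ G \ A, ∀ j ∈ G \ A, i ≠ j →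
        Disjoint (({i} : Finset (Fin n)) ×ˢ B) (({j} : Finset (Fin n)) ×ˢ B) :=
      fun i _ j _ hij => Finset.disjoint_product.2 (Or.inl (Finset.disjoint_singleton.2 hij))
    have e2 : U3 = (G \ A).biUnion (fun g => ({g} : Finset (Fin n)) ×ˢ B) :=
      product_biUnion_left (G \ A) B
    rw [e2, csum_partition q (G \ A) _ hdrows
      (fun g X => X ≠ ({g} : Finset (Fin n)) ×ˢ B)]
    have : ∀ g ∈ G \ A,
        csum q (({g} : Finset (Fin n)) ×ˢ B) (fun X => X ≠ ({g} : Finset (Fin n)) ×ˢ B)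
          = 1 - q ^ B.card := by
      intro g _
      rw [csum_ne_full, Finset.card_product, Finset.card_singleton, one_mul]
    rw [Finset.prod_congr rfl this, Finset.prod_const, Finset.card_sdiff_of_subset hA]
  rw [stepL, stepR]


lemma csum_zero_of_false {α : Type*} (q : ℝ) (S : Finset α) (E : Finset α → Prop)
    (h : ∀ I, ¬ E I) : csum q S E = 0 := by
  unfold csum
  exact Finset.sum_eq_zero fun I _ => if_neg (h I)

lemma expected_eq_triple (n : ℕ) (p q : ℝ) :
    expectedConcepts n p q = ∑ G : Finset (Fin n), ∑ A ∈ G.powerset, ∑ B ∈ Gᶜ.powerset,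
      p ^ G.card * (1 - p) ^ Gᶜ.card *
        (q ^ (A.card * B.card) * (1 - q ^ A.card) ^ (Gᶜ.card - B.card)
          * (1 - q ^ B.card) ^ (G.card - A.card)) := by
  unfold expectedConcepts
  refine Finset.sum_congr rfl fun G _ => ?_
  have h1 : ∀ I ∈ (G ×ˢ Gᶜ).powerset, (numConcepts n G I : ℝ) * kappa n p q G I
      = ∑ AB : Finset (Fin n) × Finset (Fin n),
          (if IsConcept n G I AB.1 AB.2 then kappa n p q G I else 0) := by
    intro I _
    rw [numConcepts, Finset.card_filter, Nat.cast_sum, Finset.sum_mul]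
    refine Finset.sum_congr rfl fun AB _ => ?_
    by_cases h : IsConcept n G I AB.1 AB.2 <;> simp [h]
  rw [Finset.sum_congr rfl h1, Finset.sum_comm]
  have h2 : ∀ AB : Finset (Fin n) × Finset (Fin n),
      ∑ I ∈ (G ×ˢ Gᶜ).powerset, (if IsConcept n G I AB.1 AB.2 then kappa n p q G I else 0)
      = p ^ G.card * (1 - p) ^ Gᶜ.card
          * csum q (G ×ˢ Gᶜ) (fun I => IsConcept n G I AB.1 AB.2) := by
    intro AB
    unfold csum
    rw [Finset.mul_sum]
    refine Finset.sum_congr rfl fun I _ => ?_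
    by_cases h : IsConcept n G I AB.1 AB.2 <;> simp [h, kappa] <;> ring
  rw [Finset.sum_congr rfl (fun AB _ => h2 AB), Fintype.sum_prod_type]
  have h3 : ∀ A : Finset (Fin n), A ∉ G.powerset →
      (∑ B : Finset (Fin n), p ^ G.card * (1 - p) ^ Gᶜ.card
        * csum q (G ×ˢ Gᶜ) (fun I => IsConcept n G I A B)) = 0 := by
    intro A hA
    rw [Finset.mem_powerset] at hA
    refine Finset.sum_eq_zero fun B _ => ?_
    rw [csum_zero_of_false q _ _ (fun I hI => hA hI.1), mul_zero]
  rw [← Finset.sum_subset (Finset.subset_univ G.powerset) (fun A _ hA => h3 A hA)]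
  refine Finset.sum_congr rfl fun A hA => ?_
  rw [Finset.mem_powerset] at hA
  have h4 : ∀ B : Finset (Fin n), B ∉ Gᶜ.powerset →
      p ^ G.card * (1 - p) ^ Gᶜ.card
        * csum q (G ×ˢ Gᶜ) (fun I => IsConcept n G I A B) = 0 := by
    intro B hB
    rw [Finset.mem_powerset] at hB
    rw [csum_zero_of_false q _ _ (fun I hI => hB hI.2.1), mul_zero]
  rw [← Finset.sum_subset (Finset.subset_univ Gᶜ.powerset) (fun B _ hB => h4 B hB)]
  refine Finset.sum_congr rfl fun B hB => ?_
  rw [Finset.mem_powerset] at hB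
  rw [concept_prob q hA hB]

lemma sum_powerset_card {α : Type*} (s : Finset α) (f : ℕ → ℝ) :
    ∑ t ∈ s.powerset, f t.card
      = ∑ k ∈ Finset.range (s.card + 1), (s.card.choose k : ℝ) * f k := by
  rw [Finset.sum_powerset]
  refine Finset.sum_congr rfl fun j _ => ?_
  rw [Finset.sum_powersetCard j s f, nsmul_eq_mul]

lemma triple_reindex (n : ℕ) (F : ℕ → ℕ → ℕ → ℝ) :
    (∑ G : Finset (Fin n), ∑ A ∈ G.powerset, ∑ B ∈ Gᶜ.powerset, F G.card A.card B.card)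
      = ∑ g ∈ Finset.range (n + 1), ∑ a ∈ Finset.range (g + 1),
          ∑ b ∈ Finset.range (n - g + 1),
            (n.choose g : ℝ) * (g.choose a : ℝ) * ((n - g).choose b : ℝ) * F g a b := by
  have hG : ∀ G : Finset (Fin n),
      (∑ A ∈ G.powerset, ∑ B ∈ Gᶜ.powerset, F G.card A.card B.card)
        = (fun g => ∑ a ∈ Finset.range (g + 1), (g.choose a : ℝ) *
            ∑ b ∈ Finset.range (n - g + 1), ((n - g).choose b : ℝ) * F g a b) G.card := by
    intro G
    have hGc : Gᶜ.card = n - G.card := by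
      rw [Finset.card_compl, Fintype.card_fin]
    calc ∑ A ∈ G.powerset, ∑ B ∈ Gᶜ.powerset, F G.card A.card B.card
        = ∑ A ∈ G.powerset, ∑ b ∈ Finset.range (Gᶜ.card + 1),
            (Gᶜ.card.choose b : ℝ) * F G.card A.card b :=
          Finset.sum_congr rfl fun A _ => sum_powerset_card Gᶜ (fun b => F G.card A.card b)
      _ = ∑ a ∈ Finset.range (G.card + 1), (G.card.choose a : ℝ) *
            ∑ b ∈ Finset.range (Gᶜ.card + 1), (Gᶜ.card.choose b : ℝ) * F G.card a b :=
          sum_powerset_card G (fun a => ∑ b ∈ Finset.range (Gᶜ.card + 1),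
            (Gᶜ.card.choose b : ℝ) * F G.card a b)
      _ = _ := by rw [hGc]
  rw [Finset.sum_congr rfl (fun G _ => hG G), ← Finset.powerset_univ,
    sum_powerset_card Finset.univ (fun g => ∑ a ∈ Finset.range (g + 1), (g.choose a : ℝ) *
      ∑ b ∈ Finset.range (n - g + 1), ((n - g).choose b : ℝ) * F g a b),
    Finset.card_univ, Fintype.card_fin]
  refine Finset.sum_congr rfl fun g _ => ?_
  rw [Finset.mul_sum]
  refine Finset.sum_congr rfl fun a _ => ?_
  rw [← mul_assoc, Finset.mul_sum]
  refine Finset.sum_congr rfl fun b _ => ?_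
  ring


lemma vec4_0 {α : Type*} (a b c d : α) : ![a,b,c,d] 0 = a := rfl
lemma vec4_1 {α : Type*} (a b c d : α) : ![a,b,c,d] 1 = b := rfl
lemma vec4_2 {α : Type*} (a b c d : α) : ![a,b,c,d] 2 = c := rfl
lemma vec4_3 {α : Type*} (a b c d : α) : ![a,b,c,d] 3 = d := rfl
set_option maxHeartbeats 1000000

lemma multinomial_eq (n g a b : ℕ) (hg : g ≤ n) (ha : a ≤ g) (hb : b ≤ n - g) :
    (n.factorial : ℝ) / ((a.factorial : ℝ) * (b.factorial : ℝ) * ((g - a).factorial : ℝ)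
        * ((n - g - b).factorial : ℝ))
      = (n.choose g : ℝ) * (g.choose a : ℝ) * ((n - g).choose b : ℝ) := by
  have h1 := Nat.choose_mul_factorial_mul_factorial hg
  have h2 := Nat.choose_mul_factorial_mul_factorial ha
  have h3 := Nat.choose_mul_factorial_mul_factorial hb
  have key : n.choose g * (g.choose a) * ((n - g).choose b)
      * (a.factorial * b.factorial * (g - a).factorial * (n - g - b).factorial)
      = n.factorial := by
    calc n.choose g * (g.choose a) * ((n - g).choose b)
        * (a.factorial * b.factorial * (g - a).factorial * (n - g - b).factorial)
        = n.choose g * (g.choose a * a.factorial * (g - a).factorial)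
            * ((n - g).choose b * b.factorial * (n - g - b).factorial) := by ring
      _ = n.choose g * g.factorial * (n - g).factorial := by rw [h2, h3]
      _ = n.factorial := h1
  rw [div_eq_iff (by positivity)]
  exact_mod_cast key.symm

lemma final_reindex (n : ℕ) (p q : ℝ) :
    (∑ g ∈ Finset.range (n + 1), ∑ a ∈ Finset.range (g + 1),
        ∑ b ∈ Finset.range (n - g + 1),
          (n.choose g : ℝ) * (g.choose a : ℝ) * ((n - g).choose b : ℝ) *
            (p ^ g * (1 - p) ^ (n - g) *
              (q ^ (a * b) * (1 - q ^ a) ^ (n - g - b) * (1 - q ^ b) ^ (g - a))))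
      = ∑ t ∈ Finset.Nat.antidiagonalTuple 4 n,
          (n.factorial : ℝ) /
              ((t 0).factorial * (t 1).factorial * (t 2).factorial * (t 3).factorial) *
            (p ^ (t 0 + t 2) * (1 - p) ^ (t 1 + t 3) * q ^ (t 0 * t 1) *
              (1 - q ^ t 0) ^ t 3 * (1 - q ^ t 1) ^ t 2) := by
  have step1 : (∑ g ∈ Finset.range (n + 1), ∑ a ∈ Finset.range (g + 1),
        ∑ b ∈ Finset.range (n - g + 1),
          (n.choose g : ℝ) * (g.choose a : ℝ) * ((n - g).choose b : ℝ) *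
            (p ^ g * (1 - p) ^ (n - g) *
              (q ^ (a * b) * (1 - q ^ a) ^ (n - g - b) * (1 - q ^ b) ^ (g - a))))
      = ∑ x ∈ (Finset.range (n + 1)).sigma
            (fun g => (Finset.range (g + 1)).sigma (fun _ => Finset.range (n - g + 1))),
          (n.choose x.1 : ℝ) * (x.1.choose x.2.1 : ℝ) * ((n - x.1).choose x.2.2 : ℝ) *
            (p ^ x.1 * (1 - p) ^ (n - x.1) *
              (q ^ (x.2.1 * x.2.2) * (1 - q ^ x.2.1) ^ (n - x.1 - x.2.2)
                * (1 - q ^ x.2.2) ^ (x.1 - x.2.1))) := by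
    refine Eq.trans (Finset.sum_congr rfl fun g _ => Finset.sum_sigma' _ _ _) ?_
    exact Finset.sum_sigma' _ _ _
  rw [step1]
  refine Finset.sum_nbij'
    (fun x => ![x.2.1, x.2.2, x.1 - x.2.1, n - x.1 - x.2.2])
    (fun t => ⟨t 0 + t 2, ⟨t 0, t 1⟩⟩) ?_ ?_ ?_ ?_ ?_
  · rintro ⟨g, a, b⟩ hx
    simp only [Finset.mem_sigma, Finset.mem_range] at hx
    obtain ⟨hg, ha, hb⟩ := hx
    rw [Finset.Nat.mem_antidiagonalTuple, Fin.sum_univ_four]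
    simp only [vec4_0, vec4_1, vec4_2, vec4_3]
    omega
  · intro t ht
    rw [Finset.Nat.mem_antidiagonalTuple, Fin.sum_univ_four] at ht
    simp only [Finset.mem_sigma, Finset.mem_range]
    omega
  · rintro ⟨g, a, b⟩ hx
    simp only [Finset.mem_sigma, Finset.mem_range] at hx
    obtain ⟨hg, ha, hb⟩ := hx
    simp only [vec4_0, vec4_1, vec4_2, vec4_3]
    have h1 : a + (g - a) = g := by omega
    rw [h1]
  · intro t ht
    rw [Finset.Nat.mem_antidiagonalTuple, Fin.sum_univ_four] at ht
    have e2 : t 0 + t 2 - t 0 = t 2 := by omega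
    have e3 : n - (t 0 + t 2) - t 1 = t 3 := by omega
    show ![t 0, t 1, t 0 + t 2 - t 0, n - (t 0 + t 2) - t 1] = t
    rw [e2, e3]
    exact FinVec.etaExpand_eq t
  · rintro ⟨g, a, b⟩ hx
    simp only [Finset.mem_sigma, Finset.mem_range] at hx
    obtain ⟨hg, ha, hb⟩ := hx
    have hg' : g ≤ n := by omega
    have ha' : a ≤ g := by omega
    have hb' : b ≤ n - g := by omega
    simp only [vec4_0, vec4_1, vec4_2, vec4_3]
    have e1 : a + (g - a) = g := by omega
    have e2 : b + (n - g - b) = n - g := by omega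
    rw [e1, e2, multinomial_eq n g a b hg' ha' hb']
    ring


/-- For `K ~ κ_{n,p,q}`, the expected number of formal concepts equals
`∑_{a+b+c+d=n} C(n; a,b,c,d) p^{a+c} (1-p)^{b+d} q^{ab} (1-q^a)^d (1-q^b)^c`. -/
theorem average_number_of_concepts (n : ℕ) (hn : 0 < n) (p q : ℝ)
    (hp : p ∈ Set.Icc (0 : ℝ) 1) (hq : q ∈ Set.Icc (0 : ℝ) 1) :
    expectedConcepts n p q =
      ∑ t ∈ Finset.Nat.antidiagonalTuple 4 n,
        (n.factorial : ℝ) /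
            ((t 0).factorial * (t 1).factorial * (t 2).factorial * (t 3).factorial) *
          (p ^ (t 0 + t 2) * (1 - p) ^ (t 1 + t 3) * q ^ (t 0 * t 1) *
            (1 - q ^ t 0) ^ t 3 * (1 - q ^ t 1) ^ t 2) := by
  rw [expected_eq_triple n p q]
  have hGc : ∀ G : Finset (Fin n), Gᶜ.card = n - G.card := fun G => by
    rw [Finset.card_compl, Fintype.card_fin]
  refine Eq.trans ?_ (final_reindex n p q)
  refine Eq.trans ?_ (triple_reindex n (fun g a b =>
    p ^ g * (1 - p) ^ (n - g) *
      (q ^ (a * b) * (1 - q ^ a) ^ (n - g - b) * (1 - q ^ b) ^ (g - a))))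
  exact Finset.sum_congr rfl fun G _ => by rw [hGc G]
end

section
/- Let n be a positive integer, let p, q ∈ [0,1], let K = (G, M, I) be a random formal context distributed according to κ_{n,p,q}, and let (A, B, C, D) be an ordered partition of {1, 2, …, n} into (possibly empty) pairwise disjoint sets. Then the probability of the event that (A, B) is a formal concept of K, G = A ∪ C, and M = B ∪ D, equals p^{|A|+|C|} (1−p)^{|B|+|D|} · q^{|A|·|B|} (1 − q^{|A|})^{|D|} (1 − q^{|B|})^{|C|}. -/
open Finset

section Aux
variable {α β : Type*} [DecidableEq α]

/-- Bernoulli weight of a subset `J` of a ground set `t`. -/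
noncomputable def wgt (q : ℝ) (t J : Finset α) : ℝ :=
  q ^ J.card * (1 - q) ^ (t.card - J.card)

lemma sum_wgt (q : ℝ) (t : Finset α) : ∑ J ∈ t.powerset, wgt q t J = 1 := by
  calc ∑ J ∈ t.powerset, wgt q t J
      = ∑ J ∈ t.powerset, (∏ _i ∈ J, q) * ∏ _i ∈ t \ J, (1 - q) := by
        refine Finset.sum_congr rfl fun J hJ => ?_
        rw [Finset.mem_powerset] at hJ
        simp [wgt, Finset.card_sdiff_of_subset hJ]
    _ = ∏ _i ∈ t, (q + (1 - q)) := (Finset.prod_add _ _ t).symm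
    _ = 1 := by simp

omit [DecidableEq α] in
lemma wgt_full (q : ℝ) (t : Finset α) : wgt q t t = q ^ t.card := by
  simp [wgt]

lemma sum_wgt_ne (q : ℝ) (t : Finset α) :
    ∑ J ∈ t.powerset, (if J ≠ t then wgt q t J else 0) = 1 - q ^ t.card := by
  have h2 : ∑ J ∈ t.powerset, (if J = t then wgt q t J else 0) = q ^ t.card := by
    rw [Finset.sum_eq_single_of_mem t (Finset.mem_powerset_self t)]
    · rw [if_pos rfl, wgt_full]
    · intro J _ hne; simp [hne]
  have key : ∀ J ∈ t.powerset,
      (if J ≠ t then wgt q t J else 0) = wgt q t J - (if J = t then wgt q t J else 0) := by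
    intro J _; by_cases h : J = t <;> simp [h]
  rw [Finset.sum_congr rfl key, Finset.sum_sub_distrib, sum_wgt, h2]

lemma sum_powerset_union {s u : Finset α} (h : Disjoint s u) (F G : Finset α → ℝ) :
    ∑ I ∈ (s ∪ u).powerset, F (I ∩ s) * G (I ∩ u) =
      (∑ J ∈ s.powerset, F J) * (∑ K ∈ u.powerset, G K) := by
  rw [Finset.sum_mul_sum, ← Finset.sum_product']
  have key : ∀ J K : Finset α, J ⊆ s → K ⊆ u → (J ∪ K) ∩ s = J ∧ (J ∪ K) ∩ u = K := by
    intro J K hJ hK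
    constructor
    · rw [Finset.union_inter_distrib_right, Finset.inter_eq_left.mpr hJ,
        Finset.disjoint_iff_inter_eq_empty.mp (Finset.disjoint_of_subset_left hK h.symm), Finset.union_empty]
    · rw [Finset.union_inter_distrib_right, Finset.inter_eq_left.mpr hK,
        Finset.disjoint_iff_inter_eq_empty.mp (Finset.disjoint_of_subset_left hJ h), Finset.empty_union]
  refine (Finset.sum_nbij' (fun P : Finset α × Finset α => P.1 ∪ P.2)
    (fun I => (I ∩ s, I ∩ u)) ?_ ?_ ?_ ?_ ?_).symm
  · rintro ⟨J, K⟩ hJK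
    rw [Finset.mem_product, Finset.mem_powerset, Finset.mem_powerset] at hJK
    exact Finset.mem_powerset.mpr (Finset.union_subset_union hJK.1 hJK.2)
  · intro I hI
    rw [Finset.mem_product, Finset.mem_powerset, Finset.mem_powerset]
    exact ⟨Finset.inter_subset_right, Finset.inter_subset_right⟩
  · rintro ⟨J, K⟩ hJK
    rw [Finset.mem_product, Finset.mem_powerset, Finset.mem_powerset] at hJK
    obtain ⟨h1, h2⟩ := key J K hJK.1 hJK.2
    dsimp only
    rw [h1, h2]
  · intro I hI
    rw [Finset.mem_powerset] at hI
    dsimp only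
    rw [← Finset.inter_union_distrib_left, Finset.inter_eq_left.mpr hI]
  · rintro ⟨J, K⟩ hJK
    rw [Finset.mem_product, Finset.mem_powerset, Finset.mem_powerset] at hJK
    obtain ⟨h1, h2⟩ := key J K hJK.1 hJK.2
    dsimp only
    rw [h1, h2]

lemma sum_powerset_biUnion [DecidableEq β] (parts : Finset β) (t : β → Finset α)
    (hd : ∀ b ∈ parts, ∀ b' ∈ parts, b ≠ b' → Disjoint (t b) (t b'))
    (F : β → Finset α → ℝ) :
    ∑ I ∈ (parts.biUnion t).powerset, ∏ b ∈ parts, F b (I ∩ t b) =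
      ∏ b ∈ parts, ∑ J ∈ (t b).powerset, F b J := by
  classical
  revert hd
  refine Finset.induction_on parts ?_ ?_
  · intro _; simp
  · intro a s ha ih hd
    have hd' : ∀ b ∈ s, ∀ b' ∈ s, b ≠ b' → Disjoint (t b) (t b') := fun b hb b' hb' =>
      hd b (Finset.mem_insert_of_mem hb) b' (Finset.mem_insert_of_mem hb')
    have hdisj : Disjoint (t a) (s.biUnion t) := by
      rw [Finset.disjoint_biUnion_right]
      intro b hb
      exact hd a (Finset.mem_insert_self a s) b (Finset.mem_insert_of_mem hb)
        (by rintro rfl; exact ha hb)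
    rw [Finset.biUnion_insert, Finset.prod_insert ha, ← ih hd',
      ← sum_powerset_union hdisj (F a) (fun K => ∏ b ∈ s, F b (K ∩ t b))]
    refine Finset.sum_congr rfl fun I _ => ?_
    rw [Finset.prod_insert ha]
    congr 1
    refine Finset.prod_congr rfl fun b hb => ?_
    congr 1
    rw [Finset.inter_assoc, Finset.inter_eq_right.mpr (Finset.subset_biUnion_of_mem t hb)]

lemma wgt_union (q : ℝ) {s u : Finset α} (h : Disjoint s u) {I : Finset α} (hI : I ⊆ s ∪ u) :
    wgt q (s ∪ u) I = wgt q s (I ∩ s) * wgt q u (I ∩ u) := by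
  have hIu : I ∩ s ∪ I ∩ u = I := by
    rw [← Finset.inter_union_distrib_left, Finset.inter_eq_left.mpr hI]
  have hdisj : Disjoint (I ∩ s) (I ∩ u) :=
    h.mono Finset.inter_subset_right Finset.inter_subset_right
  have hc : I.card = (I ∩ s).card + (I ∩ u).card := by
    conv_lhs => rw [← hIu]
    exact Finset.card_union_of_disjoint hdisj
  have hcu : (s ∪ u).card = s.card + u.card := Finset.card_union_of_disjoint h
  have h1 : (I ∩ s).card ≤ s.card := Finset.card_le_card Finset.inter_subset_right
  have h2 : (I ∩ u).card ≤ u.card := Finset.card_le_card Finset.inter_subset_right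
  have hsub : s.card + u.card - ((I ∩ s).card + (I ∩ u).card) =
      (s.card - (I ∩ s).card) + (u.card - (I ∩ u).card) := by omega
  unfold wgt
  rw [hc, hcu, hsub, pow_add, pow_add]
  ring

lemma wgt_biUnion [DecidableEq β] (q : ℝ) (parts : Finset β) (t : β → Finset α)
    (hd : ∀ b ∈ parts, ∀ b' ∈ parts, b ≠ b' → Disjoint (t b) (t b'))
    {I : Finset α} (hI : I ⊆ parts.biUnion t) :
    wgt q (parts.biUnion t) I = ∏ b ∈ parts, wgt q (t b) (I ∩ t b) := by
  classical
  have hIeq : I = parts.biUnion (fun b => I ∩ t b) := by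
    ext x
    simp only [Finset.mem_biUnion, Finset.mem_inter]
    constructor
    · intro hx
      obtain ⟨b, hb, hxb⟩ := Finset.mem_biUnion.mp (hI hx)
      exact ⟨b, hb, hx, hxb⟩
    · rintro ⟨b, _, hx, _⟩; exact hx
  have hIcard : I.card = ∑ b ∈ parts, (I ∩ t b).card := by
    conv_lhs => rw [hIeq]
    exact Finset.card_biUnion fun b hb b' hb' hne =>
      (hd b hb b' hb' hne).mono Finset.inter_subset_right Finset.inter_subset_right
  have htcard : (parts.biUnion t).card = ∑ b ∈ parts, (t b).card := Finset.card_biUnion hd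
  have hle : ∀ b ∈ parts, (I ∩ t b).card ≤ (t b).card := fun b _ =>
    Finset.card_le_card Finset.inter_subset_right
  have hsub : (∑ b ∈ parts, (t b).card) - ∑ b ∈ parts, (I ∩ t b).card =
      ∑ b ∈ parts, ((t b).card - (I ∩ t b).card) := by
    have h := Finset.sum_congr rfl fun b hb =>
      Nat.sub_add_cancel (hle b hb)
    have h2 : ∑ b ∈ parts, ((t b).card - (I ∩ t b).card) + ∑ b ∈ parts, (I ∩ t b).card =
        ∑ b ∈ parts, (t b).card := by
      rw [← Finset.sum_add_distrib]
      exact Finset.sum_congr rfl fun b hb => Nat.sub_add_cancel (hle b hb)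
    omega
  unfold wgt
  rw [hIcard, htcard, hsub, Finset.prod_mul_distrib, Finset.prod_pow_eq_pow_sum,
    Finset.prod_pow_eq_pow_sum]

end Aux


open Finset

set_option maxHeartbeats 1000000 in
/-- For an ordered partition `(A, B, C, D)` of `{1,…,n}`, the probability
under `κ_{n,p,q}` of the event that `(A, B)` is a formal concept, `G = A ∪ C`, and
`M = B ∪ D` equals `p^{|A|+|C|} (1-p)^{|B|+|D|} q^{|A||B|} (1-q^{|A|})^{|D|} (1-q^{|B|})^{|C|}`. -/
theorem probability_of_concept_event (n : ℕ) (hn : 0 < n) (p q : ℝ)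
    (hp : p ∈ Set.Icc (0 : ℝ) 1) (hq : q ∈ Set.Icc (0 : ℝ) 1)
    (A B C D : Finset (Fin n))
    (hAB : Disjoint A B) (hAC : Disjoint A C) (hAD : Disjoint A D)
    (hBC : Disjoint B C) (hBD : Disjoint B D) (hCD : Disjoint C D)
    (hcover : A ∪ B ∪ C ∪ D = Finset.univ) :
    (∑ G : Finset (Fin n), ∑ I ∈ (G ×ˢ Gᶜ).powerset,
        if IsConcept n G I A B ∧ G = A ∪ C ∧ Gᶜ = B ∪ D then kappa n p q G I else 0) =
      p ^ (A.card + C.card) * (1 - p) ^ (B.card + D.card) * q ^ (A.card * B.card) *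
        (1 - q ^ A.card) ^ D.card * (1 - q ^ B.card) ^ C.card := by
  classical
  -- the complement of `A ∪ C` is `B ∪ D`
  have hGc : (A ∪ C)ᶜ = B ∪ D := by
    ext x
    have hx : x ∈ A ∪ B ∪ C ∪ D := by rw [hcover]; exact Finset.mem_univ x
    simp only [Finset.mem_union] at hx
    simp only [Finset.mem_compl, Finset.mem_union]
    have h1 : x ∈ A → x ∉ B := fun h => Finset.disjoint_left.mp hAB h
    have h2 : x ∈ A → x ∉ C := fun h => Finset.disjoint_left.mp hAC h
    have h3 : x ∈ A → x ∉ D := fun h => Finset.disjoint_left.mp hAD h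
    have h4 : x ∈ B → x ∉ C := fun h => Finset.disjoint_left.mp hBC h
    have h5 : x ∈ B → x ∉ D := fun h => Finset.disjoint_left.mp hBD h
    have h6 : x ∈ C → x ∉ D := fun h => Finset.disjoint_left.mp hCD h
    tauto
  -- disjointness of products
  have pdl : ∀ (X Y U V : Finset (Fin n)), Disjoint X U → Disjoint (X ×ˢ Y) (U ×ˢ V) := by
    intro X Y U V hd
    rw [Finset.disjoint_left]
    rintro ⟨g, m⟩ hm1 hm2
    rw [Finset.mem_product] at hm1 hm2
    exact Finset.disjoint_left.mp hd hm1.1 hm2.1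
  have pdr : ∀ (X Y U V : Finset (Fin n)), Disjoint Y V → Disjoint (X ×ˢ Y) (U ×ˢ V) := by
    intro X Y U V hd
    rw [Finset.disjoint_left]
    rintro ⟨g, m⟩ hm1 hm2
    rw [Finset.mem_product] at hm1 hm2
    exact Finset.disjoint_left.mp hd hm1.2 hm2.2
  -- characterization of the concept condition
  have hconcept : ∀ I : Finset (Fin n × Fin n),
      IsConcept n (A ∪ C) I A B ↔
        (A ×ˢ B ⊆ I ∧ (∀ m ∈ D, ∃ g ∈ A, (g, m) ∉ I) ∧ (∀ g ∈ C, ∃ m ∈ B, (g, m) ∉ I)) := by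
    intro I
    unfold IsConcept extentDeriv intentDeriv
    rw [hGc]
    constructor
    · rintro ⟨hA, hB, hext, hint⟩
      refine ⟨?_, ?_, ?_⟩
      · rintro ⟨g, m⟩ hgm
        rw [Finset.mem_product] at hgm
        have hm : m ∈ (B ∪ D).filter fun m => ∀ g ∈ A, (g, m) ∈ I := by
          rw [hext]; exact hgm.2
        exact (Finset.mem_filter.mp hm).2 g hgm.1
      · intro m hm
        by_contra hcon
        push_neg at hcon
        have : m ∈ (B ∪ D).filter fun m => ∀ g ∈ A, (g, m) ∈ I :=
          Finset.mem_filter.mpr ⟨Finset.mem_union_right _ hm, hcon⟩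
        rw [hext] at this
        exact Finset.disjoint_left.mp hBD this hm
      · intro g hg
        by_contra hcon
        push_neg at hcon
        have : g ∈ (A ∪ C).filter fun g => ∀ m ∈ B, (g, m) ∈ I :=
          Finset.mem_filter.mpr ⟨Finset.mem_union_right _ hg, hcon⟩
        rw [hint] at this
        exact Finset.disjoint_left.mp hAC this hg
    · rintro ⟨h1, h2, h3⟩
      refine ⟨Finset.subset_union_left, Finset.subset_union_left, ?_, ?_⟩
      · ext m
        simp only [Finset.mem_filter, Finset.mem_union]
        constructor
        · rintro ⟨hm | hm, hall⟩
          · exact hm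
          · obtain ⟨g, hg, hgm⟩ := h2 m hm
            exact absurd (hall g hg) hgm
        · intro hm
          exact ⟨Or.inl hm, fun g hg => h1 (Finset.mem_product.mpr ⟨hg, hm⟩)⟩
      · ext g
        simp only [Finset.mem_filter, Finset.mem_union]
        constructor
        · rintro ⟨hg | hg, hall⟩
          · exact hg
          · obtain ⟨m, hm, hgm⟩ := h3 g hg
            exact absurd (hall m hm) hgm
        · intro hg
          exact ⟨Or.inl hg, fun m hm => h1 (Finset.mem_product.mpr ⟨hg, hm⟩)⟩
  -- kappa in terms of wgt
  have hkappa : ∀ I : Finset (Fin n × Fin n), kappa n p q (A ∪ C) I =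
      p ^ (A.card + C.card) * (1 - p) ^ (B.card + D.card) *
        wgt q ((A ∪ C) ×ˢ (B ∪ D)) I := by
    intro I
    unfold kappa wgt
    rw [hGc, Finset.card_union_of_disjoint hAC, Finset.card_union_of_disjoint hBD]
    ring
  -- block decomposition
  have d12 : Disjoint (A ×ˢ B) (A ×ˢ D) := pdr _ _ _ _ hBD
  have d34 : Disjoint (C ×ˢ B) (C ×ˢ D) := pdr _ _ _ _ hBD
  have dLR : Disjoint (A ×ˢ B ∪ A ×ˢ D) (C ×ˢ B ∪ C ×ˢ D) := by
    rw [Finset.disjoint_union_left]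
    constructor <;>
      (rw [Finset.disjoint_union_right]; exact ⟨pdl _ _ _ _ hAC, pdl _ _ _ _ hAC⟩)
  have hSeq : (A ∪ C) ×ˢ (B ∪ D) = (A ×ˢ B ∪ A ×ˢ D) ∪ (C ×ˢ B ∪ C ×ˢ D) := by
    rw [Finset.union_product, Finset.product_union, Finset.product_union]
  -- leaf 1
  have leaf1 : ∑ J ∈ (A ×ˢ B).powerset,
      (if A ×ˢ B ⊆ J then wgt q (A ×ˢ B) J else 0) = q ^ (A.card * B.card) := by
    have h0 : ∀ J ∈ (A ×ˢ B).powerset, J ≠ A ×ˢ B →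
        (if A ×ˢ B ⊆ J then wgt q (A ×ˢ B) J else 0) = 0 := by
      intro J hJ hne
      rw [Finset.mem_powerset] at hJ
      rw [if_neg fun hsub => hne (Finset.Subset.antisymm hJ hsub)]
    rw [Finset.sum_eq_single_of_mem _ (Finset.mem_powerset_self _) h0,
      if_pos (Finset.Subset.refl _), wgt_full, Finset.card_product]
  -- leaf 2
  have hbU2 : D.biUnion (fun m => A ×ˢ ({m} : Finset (Fin n))) = A ×ˢ D := by
    ext x
    simp only [Finset.mem_biUnion, Finset.mem_product, Finset.mem_singleton]
    constructor
    · rintro ⟨m, hm, hx1, rfl⟩; exact ⟨hx1, hm⟩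
    · rintro ⟨hx1, hx2⟩; exact ⟨x.2, hx2, hx1, rfl⟩
  have hdD : ∀ m ∈ D, ∀ m' ∈ D, m ≠ m' →
      Disjoint (A ×ˢ ({m} : Finset (Fin n))) (A ×ˢ ({m'} : Finset (Fin n))) :=
    fun m _ m' _ hne => pdr _ _ _ _ (Finset.disjoint_singleton.mpr hne)
  have inner2 : ∀ m ∈ D, ∑ S ∈ (A ×ˢ ({m} : Finset (Fin n))).powerset,
      (if ∃ g ∈ A, (g, m) ∉ S then wgt q (A ×ˢ ({m} : Finset (Fin n))) S else 0) =
      1 - q ^ A.card := by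
    intro m _
    have hcard : (A ×ˢ ({m} : Finset (Fin n))).card = A.card := by simp
    rw [show (1 : ℝ) - q ^ A.card = 1 - q ^ (A ×ˢ ({m} : Finset (Fin n))).card by rw [hcard],
      ← sum_wgt_ne q (A ×ˢ ({m} : Finset (Fin n)))]
    refine Finset.sum_congr rfl fun S hS => ?_
    rw [Finset.mem_powerset] at hS
    refine if_congr ?_ rfl rfl
    constructor
    · rintro ⟨g, hg, hgm⟩ hSeq'
      rw [hSeq'] at hgm
      exact hgm (Finset.mem_product.mpr ⟨hg, Finset.mem_singleton_self m⟩)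
    · intro hne
      obtain ⟨x, hxfull, hxS⟩ :=
        Finset.exists_of_ssubset (Finset.ssubset_iff_subset_ne.mpr ⟨hS, hne⟩)
      obtain ⟨hx1, hx2⟩ := Finset.mem_product.mp hxfull
      rw [Finset.mem_singleton] at hx2
      refine ⟨x.1, hx1, ?_⟩
      rw [← hx2, Prod.mk.eta]
      exact hxS
  have leaf2 : ∑ J ∈ (A ×ˢ D).powerset,
      (if ∀ m ∈ D, ∃ g ∈ A, (g, m) ∉ J then wgt q (A ×ˢ D) J else 0) =
      (1 - q ^ A.card) ^ D.card := by
    rw [← hbU2]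
    calc ∑ J ∈ (D.biUnion fun m => A ×ˢ ({m} : Finset (Fin n))).powerset,
          (if ∀ m ∈ D, ∃ g ∈ A, (g, m) ∉ J
            then wgt q (D.biUnion fun m => A ×ˢ ({m} : Finset (Fin n))) J else 0)
        = ∑ J ∈ (D.biUnion fun m => A ×ˢ ({m} : Finset (Fin n))).powerset,
            ∏ m ∈ D, (if ∃ g ∈ A, (g, m) ∉ J ∩ A ×ˢ ({m} : Finset (Fin n))
              then wgt q (A ×ˢ ({m} : Finset (Fin n))) (J ∩ A ×ˢ ({m} : Finset (Fin n)))
              else 0) := by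
          refine Finset.sum_congr rfl fun J hJ => ?_
          rw [Finset.mem_powerset] at hJ
          by_cases hP : ∀ m ∈ D, ∃ g ∈ A, (g, m) ∉ J
          · rw [if_pos hP, wgt_biUnion q D _ hdD hJ]
            refine Finset.prod_congr rfl fun m hm => ?_
            obtain ⟨g, hg, hgm⟩ := hP m hm
            rw [if_pos ⟨g, hg, fun hmem => hgm (Finset.mem_of_mem_inter_left hmem)⟩]
          · rw [if_neg hP]
            push_neg at hP
            obtain ⟨m, hm, hall⟩ := hP
            refine (Finset.prod_eq_zero hm ?_).symm
            rw [if_neg]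
            rintro ⟨g, hg, hgm⟩
            exact hgm (Finset.mem_inter.mpr ⟨hall g hg,
              Finset.mem_product.mpr ⟨hg, Finset.mem_singleton_self m⟩⟩)
      _ = ∏ m ∈ D, ∑ S ∈ (A ×ˢ ({m} : Finset (Fin n))).powerset,
            (if ∃ g ∈ A, (g, m) ∉ S then wgt q (A ×ˢ ({m} : Finset (Fin n))) S else 0) :=
          sum_powerset_biUnion D _ hdD
            (fun m S => if ∃ g ∈ A, (g, m) ∉ S then wgt q (A ×ˢ ({m} : Finset (Fin n))) S else 0)
      _ = ∏ m ∈ D, (1 - q ^ A.card) := Finset.prod_congr rfl inner2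
      _ = (1 - q ^ A.card) ^ D.card := by rw [Finset.prod_const]
  -- leaf 3
  have hbU3 : C.biUnion (fun g => ({g} : Finset (Fin n)) ×ˢ B) = C ×ˢ B := by
    ext x
    simp only [Finset.mem_biUnion, Finset.mem_product, Finset.mem_singleton]
    constructor
    · rintro ⟨g, hg, rfl, hx2⟩; exact ⟨hg, hx2⟩
    · rintro ⟨hx1, hx2⟩; exact ⟨x.1, hx1, rfl, hx2⟩
  have hdC : ∀ g ∈ C, ∀ g' ∈ C, g ≠ g' →
      Disjoint (({g} : Finset (Fin n)) ×ˢ B) (({g'} : Finset (Fin n)) ×ˢ B) :=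
    fun g _ g' _ hne => pdl _ _ _ _ (Finset.disjoint_singleton.mpr hne)
  have inner3 : ∀ g ∈ C, ∑ S ∈ (({g} : Finset (Fin n)) ×ˢ B).powerset,
      (if ∃ m ∈ B, (g, m) ∉ S then wgt q (({g} : Finset (Fin n)) ×ˢ B) S else 0) =
      1 - q ^ B.card := by
    intro g _
    have hcard : (({g} : Finset (Fin n)) ×ˢ B).card = B.card := by simp
    rw [show (1 : ℝ) - q ^ B.card = 1 - q ^ (({g} : Finset (Fin n)) ×ˢ B).card by rw [hcard],
      ← sum_wgt_ne q (({g} : Finset (Fin n)) ×ˢ B)]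
    refine Finset.sum_congr rfl fun S hS => ?_
    rw [Finset.mem_powerset] at hS
    refine if_congr ?_ rfl rfl
    constructor
    · rintro ⟨m, hm, hgm⟩ hSeq'
      rw [hSeq'] at hgm
      exact hgm (Finset.mem_product.mpr ⟨Finset.mem_singleton_self g, hm⟩)
    · intro hne
      obtain ⟨x, hxfull, hxS⟩ :=
        Finset.exists_of_ssubset (Finset.ssubset_iff_subset_ne.mpr ⟨hS, hne⟩)
      obtain ⟨hx1, hx2⟩ := Finset.mem_product.mp hxfull
      rw [Finset.mem_singleton] at hx1
      refine ⟨x.2, hx2, ?_⟩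
      rw [← hx1, Prod.mk.eta]
      exact hxS
  have leaf3 : ∑ K ∈ (C ×ˢ B).powerset,
      (if ∀ g ∈ C, ∃ m ∈ B, (g, m) ∉ K then wgt q (C ×ˢ B) K else 0) =
      (1 - q ^ B.card) ^ C.card := by
    rw [← hbU3]
    calc ∑ K ∈ (C.biUnion fun g => ({g} : Finset (Fin n)) ×ˢ B).powerset,
          (if ∀ g ∈ C, ∃ m ∈ B, (g, m) ∉ K
            then wgt q (C.biUnion fun g => ({g} : Finset (Fin n)) ×ˢ B) K else 0)
        = ∑ K ∈ (C.biUnion fun g => ({g} : Finset (Fin n)) ×ˢ B).powerset,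
            ∏ g ∈ C, (if ∃ m ∈ B, (g, m) ∉ K ∩ ({g} : Finset (Fin n)) ×ˢ B
              then wgt q (({g} : Finset (Fin n)) ×ˢ B) (K ∩ ({g} : Finset (Fin n)) ×ˢ B)
              else 0) := by
          refine Finset.sum_congr rfl fun K hK => ?_
          rw [Finset.mem_powerset] at hK
          by_cases hP : ∀ g ∈ C, ∃ m ∈ B, (g, m) ∉ K
          · rw [if_pos hP, wgt_biUnion q C _ hdC hK]
            refine Finset.prod_congr rfl fun g hg => ?_
            obtain ⟨m, hm, hgm⟩ := hP g hg
            rw [if_pos ⟨m, hm, fun hmem => hgm (Finset.mem_of_mem_inter_left hmem)⟩]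
          · rw [if_neg hP]
            push_neg at hP
            obtain ⟨g, hg, hall⟩ := hP
            refine (Finset.prod_eq_zero hg ?_).symm
            rw [if_neg]
            rintro ⟨m, hm, hgm⟩
            exact hgm (Finset.mem_inter.mpr ⟨hall m hm,
              Finset.mem_product.mpr ⟨Finset.mem_singleton_self g, hm⟩⟩)
      _ = ∏ g ∈ C, ∑ S ∈ (({g} : Finset (Fin n)) ×ˢ B).powerset,
            (if ∃ m ∈ B, (g, m) ∉ S then wgt q (({g} : Finset (Fin n)) ×ˢ B) S else 0) :=
          sum_powerset_biUnion C _ hdC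
            (fun g S => if ∃ m ∈ B, (g, m) ∉ S then wgt q (({g} : Finset (Fin n)) ×ˢ B) S else 0)
      _ = ∏ g ∈ C, (1 - q ^ B.card) := Finset.prod_congr rfl inner3
      _ = (1 - q ^ B.card) ^ C.card := by rw [Finset.prod_const]
  -- left factor
  have sumL : ∑ J ∈ (A ×ˢ B ∪ A ×ˢ D).powerset,
      (if A ×ˢ B ⊆ J ∧ (∀ m ∈ D, ∃ g ∈ A, (g, m) ∉ J)
        then wgt q (A ×ˢ B ∪ A ×ˢ D) J else 0) =
      q ^ (A.card * B.card) * (1 - q ^ A.card) ^ D.card := by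
    calc ∑ J ∈ (A ×ˢ B ∪ A ×ˢ D).powerset,
          (if A ×ˢ B ⊆ J ∧ (∀ m ∈ D, ∃ g ∈ A, (g, m) ∉ J)
            then wgt q (A ×ˢ B ∪ A ×ˢ D) J else 0)
        = ∑ J ∈ (A ×ˢ B ∪ A ×ˢ D).powerset,
            (if A ×ˢ B ⊆ J ∩ A ×ˢ B then wgt q (A ×ˢ B) (J ∩ A ×ˢ B) else 0) *
            (if ∀ m ∈ D, ∃ g ∈ A, (g, m) ∉ J ∩ A ×ˢ D
              then wgt q (A ×ˢ D) (J ∩ A ×ˢ D) else 0) := by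
          refine Finset.sum_congr rfl fun J hJ => ?_
          rw [Finset.mem_powerset] at hJ
          have e1 : (A ×ˢ B ⊆ J ∩ A ×ˢ B) ↔ A ×ˢ B ⊆ J :=
            ⟨fun h => h.trans Finset.inter_subset_left,
             fun h => Finset.subset_inter h (Finset.Subset.refl _)⟩
          have e2 : (∀ m ∈ D, ∃ g ∈ A, (g, m) ∉ J ∩ A ×ˢ D) ↔
              (∀ m ∈ D, ∃ g ∈ A, (g, m) ∉ J) := by
            constructor
            · intro h m hm
              obtain ⟨g, hg, hgm⟩ := h m hm
              exact ⟨g, hg, fun hin => hgm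
                (Finset.mem_inter.mpr ⟨hin, Finset.mem_product.mpr ⟨hg, hm⟩⟩)⟩
            · intro h m hm
              obtain ⟨g, hg, hgm⟩ := h m hm
              exact ⟨g, hg, fun hin => hgm (Finset.mem_of_mem_inter_left hin)⟩
          by_cases h1 : A ×ˢ B ⊆ J
          · by_cases h2 : ∀ m ∈ D, ∃ g ∈ A, (g, m) ∉ J
            · rw [if_pos ⟨h1, h2⟩, if_pos (e1.mpr h1), if_pos (e2.mpr h2),
                wgt_union q d12 hJ]
            · rw [if_neg fun hc => h2 hc.2, if_neg fun hc => h2 (e2.mp hc), mul_zero]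
          · rw [if_neg fun hc => h1 hc.1, if_neg fun hc => h1 (e1.mp hc), zero_mul]
      _ = (∑ J ∈ (A ×ˢ B).powerset, (if A ×ˢ B ⊆ J then wgt q (A ×ˢ B) J else 0)) *
          (∑ J ∈ (A ×ˢ D).powerset,
            (if ∀ m ∈ D, ∃ g ∈ A, (g, m) ∉ J then wgt q (A ×ˢ D) J else 0)) :=
          sum_powerset_union d12
            (fun S => if A ×ˢ B ⊆ S then wgt q (A ×ˢ B) S else 0)
            (fun S => if ∀ m ∈ D, ∃ g ∈ A, (g, m) ∉ S then wgt q (A ×ˢ D) S else 0)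
      _ = q ^ (A.card * B.card) * (1 - q ^ A.card) ^ D.card := by rw [leaf1, leaf2]
  -- right factor
  have sumR : ∑ K ∈ (C ×ˢ B ∪ C ×ˢ D).powerset,
      (if ∀ g ∈ C, ∃ m ∈ B, (g, m) ∉ K then wgt q (C ×ˢ B ∪ C ×ˢ D) K else 0) =
      (1 - q ^ B.card) ^ C.card := by
    calc ∑ K ∈ (C ×ˢ B ∪ C ×ˢ D).powerset,
          (if ∀ g ∈ C, ∃ m ∈ B, (g, m) ∉ K then wgt q (C ×ˢ B ∪ C ×ˢ D) K else 0)
        = ∑ K ∈ (C ×ˢ B ∪ C ×ˢ D).powerset,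
            (if ∀ g ∈ C, ∃ m ∈ B, (g, m) ∉ K ∩ C ×ˢ B
              then wgt q (C ×ˢ B) (K ∩ C ×ˢ B) else 0) *
            wgt q (C ×ˢ D) (K ∩ C ×ˢ D) := by
          refine Finset.sum_congr rfl fun K hK => ?_
          rw [Finset.mem_powerset] at hK
          have e3 : (∀ g ∈ C, ∃ m ∈ B, (g, m) ∉ K ∩ C ×ˢ B) ↔
              (∀ g ∈ C, ∃ m ∈ B, (g, m) ∉ K) := by
            constructor
            · intro h g hg
              obtain ⟨m, hm, hgm⟩ := h g hg
              exact ⟨m, hm, fun hin => hgm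
                (Finset.mem_inter.mpr ⟨hin, Finset.mem_product.mpr ⟨hg, hm⟩⟩)⟩
            · intro h g hg
              obtain ⟨m, hm, hgm⟩ := h g hg
              exact ⟨m, hm, fun hin => hgm (Finset.mem_of_mem_inter_left hin)⟩
          by_cases h3 : ∀ g ∈ C, ∃ m ∈ B, (g, m) ∉ K
          · rw [if_pos h3, if_pos (e3.mpr h3), wgt_union q d34 hK]
          · rw [if_neg h3, if_neg fun hc => h3 (e3.mp hc), zero_mul]
      _ = (∑ K ∈ (C ×ˢ B).powerset,
            (if ∀ g ∈ C, ∃ m ∈ B, (g, m) ∉ K then wgt q (C ×ˢ B) K else 0)) *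
          (∑ S ∈ (C ×ˢ D).powerset, wgt q (C ×ˢ D) S) :=
          sum_powerset_union d34
            (fun S => if ∀ g ∈ C, ∃ m ∈ B, (g, m) ∉ S then wgt q (C ×ˢ B) S else 0)
            (fun S => wgt q (C ×ˢ D) S)
      _ = (1 - q ^ B.card) ^ C.card := by rw [leaf3, sum_wgt, mul_one]
  -- the main inner sum
  have key : ∑ I ∈ ((A ∪ C) ×ˢ (B ∪ D)).powerset,
      (if A ×ˢ B ⊆ I ∧ (∀ m ∈ D, ∃ g ∈ A, (g, m) ∉ I) ∧ (∀ g ∈ C, ∃ m ∈ B, (g, m) ∉ I)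
        then wgt q ((A ∪ C) ×ˢ (B ∪ D)) I else 0) =
      q ^ (A.card * B.card) * (1 - q ^ A.card) ^ D.card * (1 - q ^ B.card) ^ C.card := by
    rw [hSeq]
    calc ∑ I ∈ ((A ×ˢ B ∪ A ×ˢ D) ∪ (C ×ˢ B ∪ C ×ˢ D)).powerset,
          (if A ×ˢ B ⊆ I ∧ (∀ m ∈ D, ∃ g ∈ A, (g, m) ∉ I) ∧ (∀ g ∈ C, ∃ m ∈ B, (g, m) ∉ I)
            then wgt q ((A ×ˢ B ∪ A ×ˢ D) ∪ (C ×ˢ B ∪ C ×ˢ D)) I else 0)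
        = ∑ I ∈ ((A ×ˢ B ∪ A ×ˢ D) ∪ (C ×ˢ B ∪ C ×ˢ D)).powerset,
            (if A ×ˢ B ⊆ I ∩ (A ×ˢ B ∪ A ×ˢ D) ∧
                (∀ m ∈ D, ∃ g ∈ A, (g, m) ∉ I ∩ (A ×ˢ B ∪ A ×ˢ D))
              then wgt q (A ×ˢ B ∪ A ×ˢ D) (I ∩ (A ×ˢ B ∪ A ×ˢ D)) else 0) *
            (if ∀ g ∈ C, ∃ m ∈ B, (g, m) ∉ I ∩ (C ×ˢ B ∪ C ×ˢ D)
              then wgt q (C ×ˢ B ∪ C ×ˢ D) (I ∩ (C ×ˢ B ∪ C ×ˢ D)) else 0) := by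
          refine Finset.sum_congr rfl fun I hI => ?_
          rw [Finset.mem_powerset] at hI
          have f1 : (A ×ˢ B ⊆ I ∩ (A ×ˢ B ∪ A ×ˢ D)) ↔ A ×ˢ B ⊆ I :=
            ⟨fun h => h.trans Finset.inter_subset_left,
             fun h => Finset.subset_inter h Finset.subset_union_left⟩
          have f2 : (∀ m ∈ D, ∃ g ∈ A, (g, m) ∉ I ∩ (A ×ˢ B ∪ A ×ˢ D)) ↔
              (∀ m ∈ D, ∃ g ∈ A, (g, m) ∉ I) := by
            constructor
            · intro h m hm
              obtain ⟨g, hg, hgm⟩ := h m hm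
              exact ⟨g, hg, fun hin => hgm (Finset.mem_inter.mpr ⟨hin,
                Finset.mem_union_right _ (Finset.mem_product.mpr ⟨hg, hm⟩)⟩)⟩
            · intro h m hm
              obtain ⟨g, hg, hgm⟩ := h m hm
              exact ⟨g, hg, fun hin => hgm (Finset.mem_of_mem_inter_left hin)⟩
          have f3 : (∀ g ∈ C, ∃ m ∈ B, (g, m) ∉ I ∩ (C ×ˢ B ∪ C ×ˢ D)) ↔
              (∀ g ∈ C, ∃ m ∈ B, (g, m) ∉ I) := by
            constructor
            · intro h g hg
              obtain ⟨m, hm, hgm⟩ := h g hg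
              exact ⟨m, hm, fun hin => hgm (Finset.mem_inter.mpr ⟨hin,
                Finset.mem_union_left _ (Finset.mem_product.mpr ⟨hg, hm⟩)⟩)⟩
            · intro h g hg
              obtain ⟨m, hm, hgm⟩ := h g hg
              exact ⟨m, hm, fun hin => hgm (Finset.mem_of_mem_inter_left hin)⟩
          by_cases hL : A ×ˢ B ⊆ I ∧ (∀ m ∈ D, ∃ g ∈ A, (g, m) ∉ I)
          · by_cases hR : ∀ g ∈ C, ∃ m ∈ B, (g, m) ∉ I
            · rw [if_pos ⟨hL.1, hL.2, hR⟩, if_pos ⟨f1.mpr hL.1, f2.mpr hL.2⟩,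
                if_pos (f3.mpr hR), wgt_union q dLR hI]
            · rw [if_neg fun hc => hR hc.2.2, if_neg fun hc => hR (f3.mp hc), mul_zero]
          · rw [if_neg fun hc => hL ⟨hc.1, hc.2.1⟩,
              if_neg fun hc => hL ⟨f1.mp hc.1, f2.mp hc.2⟩, zero_mul]
      _ = (∑ J ∈ (A ×ˢ B ∪ A ×ˢ D).powerset,
            (if A ×ˢ B ⊆ J ∧ (∀ m ∈ D, ∃ g ∈ A, (g, m) ∉ J)
              then wgt q (A ×ˢ B ∪ A ×ˢ D) J else 0)) *
          (∑ K ∈ (C ×ˢ B ∪ C ×ˢ D).powerset,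
            (if ∀ g ∈ C, ∃ m ∈ B, (g, m) ∉ K then wgt q (C ×ˢ B ∪ C ×ˢ D) K else 0)) :=
          sum_powerset_union dLR
            (fun J => if A ×ˢ B ⊆ J ∧ (∀ m ∈ D, ∃ g ∈ A, (g, m) ∉ J)
              then wgt q (A ×ˢ B ∪ A ×ˢ D) J else 0)
            (fun K => if ∀ g ∈ C, ∃ m ∈ B, (g, m) ∉ K
              then wgt q (C ×ˢ B ∪ C ×ˢ D) K else 0)
      _ = q ^ (A.card * B.card) * (1 - q ^ A.card) ^ D.card * (1 - q ^ B.card) ^ C.card := by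
          rw [sumL, sumR]
  -- collapse the outer sum
  rw [Finset.sum_eq_single (A ∪ C)]
  rotate_left
  · intro G _ hG
    refine Finset.sum_eq_zero fun I _ => ?_
    rw [if_neg]
    rintro ⟨_, rfl, _⟩
    exact hG rfl
  · intro h; exact absurd (Finset.mem_univ _) h
  rw [hGc]
  calc ∑ I ∈ ((A ∪ C) ×ˢ (B ∪ D)).powerset,
        (if IsConcept n (A ∪ C) I A B ∧ A ∪ C = A ∪ C ∧ B ∪ D = B ∪ D
          then kappa n p q (A ∪ C) I else 0)
      = ∑ I ∈ ((A ∪ C) ×ˢ (B ∪ D)).powerset,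
          (p ^ (A.card + C.card) * (1 - p) ^ (B.card + D.card)) *
          (if A ×ˢ B ⊆ I ∧ (∀ m ∈ D, ∃ g ∈ A, (g, m) ∉ I) ∧ (∀ g ∈ C, ∃ m ∈ B, (g, m) ∉ I)
            then wgt q ((A ∪ C) ×ˢ (B ∪ D)) I else 0) := by
        refine Finset.sum_congr rfl fun I hI => ?_
        have hc : (IsConcept n (A ∪ C) I A B ∧ A ∪ C = A ∪ C ∧ B ∪ D = B ∪ D) ↔
            (A ×ˢ B ⊆ I ∧ (∀ m ∈ D, ∃ g ∈ A, (g, m) ∉ I) ∧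
              (∀ g ∈ C, ∃ m ∈ B, (g, m) ∉ I)) :=
          ⟨fun h => (hconcept I).mp h.1, fun h => ⟨(hconcept I).mpr h, rfl, rfl⟩⟩
        rw [if_congr hc (hkappa I) rfl, mul_ite, mul_zero, mul_assoc]
    _ = (p ^ (A.card + C.card) * (1 - p) ^ (B.card + D.card)) *
        ∑ I ∈ ((A ∪ C) ×ˢ (B ∪ D)).powerset,
          (if A ×ˢ B ⊆ I ∧ (∀ m ∈ D, ∃ g ∈ A, (g, m) ∉ I) ∧ (∀ g ∈ C, ∃ m ∈ B, (g, m) ∉ I)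
            then wgt q ((A ∪ C) ×ˢ (B ∪ D)) I else 0) := by rw [← Finset.mul_sum]
    _ = p ^ (A.card + C.card) * (1 - p) ^ (B.card + D.card) * q ^ (A.card * B.card) *
        (1 - q ^ A.card) ^ D.card * (1 - q ^ B.card) ^ C.card := by rw [key]; ring
end

section
/- Let (K_n) be a sequence of random formal contexts with K_n distributed according to κ_{n,1/2,1/2}. Then for all sufficiently large n, the expected number of formal concepts satisfies E[|𝔅(K_n)|] > n^{log n}, where log denotes the natural logarithm. -/
open Finset

/-! Take `|G| = ⌊n/2⌋`, `k = ⌊log₂ n⌋ + 2` and pairs `A ⊆ G`, `B ⊆ Gᶜ` with `|A| = |B| = k`.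
Such a pair is a concept as soon as `A × B ⊆ I` and no element outside `A ∪ B` is incident
to all of `A` (resp. `B`); a union bound over these at most `n` elements shows that this
happens with probability at least `2^(-k²) (1 - n 2^(-k)) ≥ 2^(-k²) / 2`. Hence
`E ≥ C(n, n/2) 2^(-n) C(n/2, k)² 2^(-k²) / 2 ≥ (n / 64k²)^k / (2(n + 1))`, whose logarithm
is `(1 - o(1)) k log n ≥ (1 / log 2 - o(1)) log² n`, and `1 / log 2 > 1`. -/

open Real Filter

lemma Nat.two_pow_le_succ_mul_choose_half (n : ℕ) : 2 ^ n ≤ (n + 1) * n.choose (n / 2) :=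
  calc 2 ^ n = ∑ i ∈ range (n + 1), n.choose i := (Nat.sum_range_choose n).symm
    _ ≤ #(range (n + 1)) • n.choose (n / 2) :=
        sum_le_card_nsmul _ _ _ fun i _ => Nat.choose_le_middle i n
    _ = (n + 1) * n.choose (n / 2) := by rw [card_range, smul_eq_mul]

lemma Nat.succ_sub_pow_le_pow_mul_choose (h k : ℕ) : (h + 1 - k) ^ k ≤ k ^ k * h.choose k :=
  (Nat.pow_sub_le_descFactorial h k).trans <| by
    rw [Nat.descFactorial_eq_factorial_mul_choose]
    exact Nat.mul_le_mul_right _ (Nat.factorial_le_pow k)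

lemma Nat.two_mul_le_two_pow_log_add_two {n : ℕ} (hn : n ≠ 0) :
    2 * n ≤ 2 ^ (Nat.log 2 n + 2) ∧ 2 ^ (Nat.log 2 n + 2) ≤ 4 * n := by
  have hlt := Nat.lt_pow_succ_log_self one_lt_two n
  have hle := Nat.pow_log_le_self 2 hn
  rw [pow_succ] at hlt
  rw [pow_add]
  omega

lemma two_pow_card_mul_card_Icc {α : Type*} [DecidableEq α] {s t : Finset α} (h : s ⊆ t) :
    2 ^ #s * #(Icc s t) = 2 ^ #t := by
  rw [card_Icc_finset h, ← pow_add, Nat.add_sub_cancel' (card_le_card h)]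

lemma card_Icc_le_card_add_sum {α ι : Type*} [DecidableEq α] {s t : Finset α}
    {S : Finset (Finset α)} (X : Finset ι) (T : ι → Finset α)
    (hS : ∀ u ∈ Icc s t, (∀ i ∈ X, ¬ T i ⊆ u) → u ∈ S) :
    #(Icc s t) ≤ #S + ∑ i ∈ X, #(Icc (s ∪ T i) t) := by
  have hcover : Icc s t ⊆ S ∪ X.biUnion fun i => Icc (s ∪ T i) t := by
    intro u hu
    by_cases hgood : ∀ i ∈ X, ¬ T i ⊆ u
    · exact mem_union_left _ (hS u hu hgood)
    · obtain ⟨i, hi, hTi⟩ := by simpa using hgood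
      obtain ⟨hsu, hut⟩ := mem_Icc.1 hu
      exact mem_union_right _ (mem_biUnion.2 ⟨i, hi, mem_Icc.2 ⟨union_subset hsu hTi, hut⟩⟩)
  exact (card_le_card hcover).trans <| (card_union_le _ _).trans <|
    Nat.add_le_add_left card_biUnion_le _

section

variable {n : ℕ}

-- `extensionBlock G A B x ⊆ I` says `x ∈ B'` for an object `x` and `x ∈ A'` for an attribute.
def extensionBlock (G A B : Finset (Fin n)) (x : Fin n) : Finset (Fin n × Fin n) :=
  if x ∈ G then {x} ×ˢ B else A ×ˢ {x}

lemma isConcept_of_forall_not_subset {G A B : Finset (Fin n)} {I : Finset (Fin n × Fin n)}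
    (hA : A ⊆ G) (hB : B ⊆ Gᶜ) (hAB : A ×ˢ B ⊆ I)
    (hblock : ∀ x ∉ A ∪ B, ¬ extensionBlock G A B x ⊆ I) : IsConcept n G I A B := by
  refine ⟨hA, hB, ?_, ?_⟩
  · ext m
    simp only [extentDeriv, mem_filter]
    refine ⟨fun ⟨hm, hall⟩ => ?_,
      fun hm => ⟨hB hm, fun g hg => hAB (mem_product.2 ⟨hg, hm⟩)⟩⟩
    by_contra hmB
    have hmG : m ∉ G := mem_compl.1 hm
    refine hblock m (notMem_union.2 ⟨fun h => hmG (hA h), hmB⟩) ?_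
    simpa [extensionBlock, hmG, subset_iff] using hall
  · ext g
    simp only [intentDeriv, mem_filter]
    refine ⟨fun ⟨hg, hall⟩ => ?_,
      fun hg => ⟨hA hg, fun m hm => hAB (mem_product.2 ⟨hg, hm⟩)⟩⟩
    by_contra hgA
    refine hblock g (notMem_union.2 ⟨hgA, fun h => mem_compl.1 (hB h) hg⟩) ?_
    simpa [extensionBlock, hg, subset_iff] using hall

lemma union_extensionBlock_subset_and_card {G A B : Finset (Fin n)} {k : ℕ}
    (hA : A ⊆ G) (hB : B ⊆ Gᶜ) (hAk : #A = k) (hBk : #B = k) {x : Fin n} (hx : x ∉ A ∪ B) :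
    A ×ˢ B ∪ extensionBlock G A B x ⊆ G ×ˢ Gᶜ ∧
      #(A ×ˢ B ∪ extensionBlock G A B x) = k * k + k := by
  obtain ⟨hxA, hxB⟩ := notMem_union.1 hx
  have hAB : A ×ˢ B ⊆ G ×ˢ Gᶜ := product_subset_product hA hB
  unfold extensionBlock
  split_ifs with hxG
  · refine ⟨union_subset hAB (product_subset_product (by simpa using hxG) hB), ?_⟩
    rw [card_union_of_disjoint (disjoint_product.2 (Or.inl (by simpa using hxA))),
      card_product, card_product, hAk, hBk, card_singleton, one_mul]
  · refine ⟨union_subset hAB (product_subset_product hA (by simpa using hxG)), ?_⟩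
    rw [card_union_of_disjoint (disjoint_product.2 (Or.inr (by simpa using hxB))),
      card_product, card_product, hAk, hBk, card_singleton, mul_one]

lemma two_pow_mul_one_sub_le_card_isConcept {G A B : Finset (Fin n)} {k : ℕ}
    (hA : A ⊆ G) (hB : B ⊆ Gᶜ) (hAk : #A = k) (hBk : #B = k) :
    (2 : ℝ) ^ #(G ×ˢ Gᶜ) * (1 - n / 2 ^ k) ≤
      2 ^ (k * k) * #{I ∈ (G ×ˢ Gᶜ).powerset | IsConcept n G I A B} := by
  set U := G ×ˢ Gᶜ
  set X := (A ∪ B)ᶜ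
  have hAB : A ×ˢ B ⊆ U := product_subset_product hA hB
  have hABk : #(A ×ˢ B) = k * k := by rw [card_product, hAk, hBk]
  have hgood : ∀ I ∈ Icc (A ×ˢ B) U, (∀ x ∈ X, ¬ extensionBlock G A B x ⊆ I) →
      I ∈ {I ∈ U.powerset | IsConcept n G I A B} := by
    intro I hIcc hblock
    obtain ⟨hABI, hIU⟩ := mem_Icc.1 hIcc
    exact mem_filter.2 ⟨mem_powerset.2 hIU,
      isConcept_of_forall_not_subset hA hB hABI fun x hx => hblock x (mem_compl.2 hx)⟩
  have hIcc : 2 ^ (k * k) * #(Icc (A ×ˢ B) U) = 2 ^ #U := by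
    rw [← hABk, two_pow_card_mul_card_Icc hAB]
  have hIccX : ∀ x ∈ X, 2 ^ (k * k) * #(Icc (A ×ˢ B ∪ extensionBlock G A B x) U) * 2 ^ k =
      2 ^ #U := fun x hx => by
    obtain ⟨hsub, hcard⟩ := union_extensionBlock_subset_and_card hA hB hAk hBk (mem_compl.1 hx)
    rw [mul_right_comm, ← pow_add, ← hcard, two_pow_card_mul_card_Icc hsub]
  have hX : #X ≤ n := (card_le_univ X).trans_eq (Fintype.card_fin n)
  have key : 2 ^ #U * 2 ^ k ≤
      2 ^ (k * k) * #{I ∈ U.powerset | IsConcept n G I A B} * 2 ^ k + n * 2 ^ #U :=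
    calc 2 ^ #U * 2 ^ k = 2 ^ (k * k) * #(Icc (A ×ˢ B) U) * 2 ^ k := by rw [hIcc]
      _ ≤ 2 ^ (k * k) * (#{I ∈ U.powerset | IsConcept n G I A B} +
            ∑ x ∈ X, #(Icc (A ×ˢ B ∪ extensionBlock G A B x) U)) * 2 ^ k := by
        gcongr
        exact card_Icc_le_card_add_sum X (extensionBlock G A B) hgood
      _ = 2 ^ (k * k) * #{I ∈ U.powerset | IsConcept n G I A B} * 2 ^ k + #X * 2 ^ #U := by
        rw [mul_add, add_mul, mul_sum, sum_mul, sum_congr rfl hIccX, sum_const, smul_eq_mul]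
      _ ≤ _ := by gcongr
  have hkey : ((2 : ℝ) ^ #U) * 2 ^ k ≤
      2 ^ (k * k) * #{I ∈ U.powerset | IsConcept n G I A B} * 2 ^ k + n * 2 ^ #U := by
    exact_mod_cast key
  have h2k : (0 : ℝ) < 2 ^ k := by positivity
  rw [← mul_le_mul_iff_of_pos_right h2k]
  calc (2 : ℝ) ^ #U * (1 - n / 2 ^ k) * 2 ^ k = 2 ^ #U * 2 ^ k - n * 2 ^ #U := by
        field_simp
    _ ≤ _ := by linarith

lemma kappa_half_half {G : Finset (Fin n)} {I : Finset (Fin n × Fin n)} (hI : I ⊆ G ×ˢ Gᶜ) :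
    kappa n (1 / 2) (1 / 2) G I = 1 / 2 ^ (n + #(G ×ˢ Gᶜ)) := by
  have hGn : #G + #Gᶜ = n := by rw [card_add_card_compl, Fintype.card_fin]
  have hIU : #I + (#(G ×ˢ Gᶜ) - #I) = #(G ×ˢ Gᶜ) := Nat.add_sub_cancel' (card_le_card hI)
  rw [kappa, show (1 : ℝ) - 1 / 2 = 1 / 2 by norm_num, ← pow_add, ← pow_add, ← pow_add,
    add_assoc (#G + #Gᶜ), hIU, hGn, one_div_pow]

lemma expectedConcepts_half_half_eq :
    expectedConcepts n (1 / 2) (1 / 2) =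
      ∑ G : Finset (Fin n), ∑ AB : Finset (Fin n) × Finset (Fin n),
        (#{I ∈ (G ×ˢ Gᶜ).powerset | IsConcept n G I AB.1 AB.2} : ℝ) / 2 ^ (n + #(G ×ˢ Gᶜ)) := by
  refine sum_congr rfl fun G _ => ?_
  calc ∑ I ∈ (G ×ˢ Gᶜ).powerset, (numConcepts n G I : ℝ) * kappa n (1 / 2) (1 / 2) G I
      = ∑ I ∈ (G ×ˢ Gᶜ).powerset, ∑ AB : Finset (Fin n) × Finset (Fin n),
          (if IsConcept n G I AB.1 AB.2 then 1 else 0 : ℝ) / 2 ^ (n + #(G ×ˢ Gᶜ)) := by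
        refine sum_congr rfl fun I hI => ?_
        rw [kappa_half_half (mem_powerset.1 hI), numConcepts, card_filter, ← sum_div]
        push_cast
        ring
    _ = _ := by
        rw [sum_comm]
        refine sum_congr rfl fun AB _ => ?_
        rw [← sum_div, card_filter]
        push_cast
        rfl

lemma choose_mul_le_expectedConcepts_half_half (h k : ℕ) :
    (n.choose h * (h.choose k * (n - h).choose k) : ℝ) * ((1 - n / 2 ^ k) / 2 ^ (n + k * k)) ≤
      expectedConcepts n (1 / 2) (1 / 2) := by
  set f : Finset (Fin n) → Finset (Fin n) × Finset (Fin n) → ℝ := fun G AB =>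
    #{I ∈ (G ×ˢ Gᶜ).powerset | IsConcept n G I AB.1 AB.2} / 2 ^ (n + #(G ×ˢ Gᶜ))
  have hf : ∀ G AB, 0 ≤ f G AB := fun G AB => by positivity
  have hterm : ∀ G ∈ powersetCard h univ, ∀ AB ∈ powersetCard k G ×ˢ powersetCard k Gᶜ,
      (1 - n / 2 ^ k) / 2 ^ (n + k * k) ≤ f G AB := by
    rintro G - ⟨A, B⟩ hAB
    obtain ⟨hA, hB⟩ := mem_product.1 hAB
    obtain ⟨hAG, hAk⟩ := mem_powersetCard.1 hA
    obtain ⟨hBG, hBk⟩ := mem_powersetCard.1 hB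
    have hprob := two_pow_mul_one_sub_le_card_isConcept hAG hBG hAk hBk
    rw [div_le_div_iff₀ (by positivity) (by positivity), pow_add, pow_add]
    calc (1 - n / 2 ^ k : ℝ) * (2 ^ n * 2 ^ #(G ×ˢ Gᶜ))
        = 2 ^ n * (2 ^ #(G ×ˢ Gᶜ) * (1 - n / 2 ^ k)) := by ring
      _ ≤ 2 ^ n * (2 ^ (k * k) * #{I ∈ (G ×ˢ Gᶜ).powerset | IsConcept n G I A B}) :=
        mul_le_mul_of_nonneg_left hprob (by positivity)
      _ = #{I ∈ (G ×ˢ Gᶜ).powerset | IsConcept n G I A B} * (2 ^ n * 2 ^ (k * k)) := by ring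
  have hcard : ∀ G ∈ powersetCard h (univ : Finset (Fin n)),
      #(powersetCard k G ×ˢ powersetCard k Gᶜ) = h.choose k * (n - h).choose k := by
    intro G hG
    rw [card_product, card_powersetCard, card_powersetCard, card_compl, Fintype.card_fin,
      (mem_powersetCard.1 hG).2]
  calc (n.choose h * (h.choose k * (n - h).choose k) : ℝ) * ((1 - n / 2 ^ k) / 2 ^ (n + k * k))
      = ∑ G ∈ powersetCard h univ, ∑ AB ∈ powersetCard k G ×ˢ powersetCard k Gᶜ,
          ((1 - n / 2 ^ k) / 2 ^ (n + k * k) : ℝ) := by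
        simp only [sum_const, nsmul_eq_mul]
        rw [sum_congr rfl fun G hG => by rw [hcard G hG], sum_const, card_powersetCard,
          card_univ, Fintype.card_fin]
        push_cast
        ring
    _ ≤ ∑ G ∈ powersetCard h univ, ∑ AB ∈ powersetCard k G ×ˢ powersetCard k Gᶜ, f G AB :=
        sum_le_sum fun G hG => sum_le_sum (hterm G hG)
    _ ≤ ∑ G ∈ powersetCard h univ, ∑ AB, f G AB :=
        sum_le_sum fun G _ =>
          sum_le_sum_of_subset_of_nonneg (subset_univ _) fun AB _ _ => hf G AB
    _ ≤ ∑ G, ∑ AB, f G AB :=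
        sum_le_sum_of_subset_of_nonneg (subset_univ _) fun G _ _ => sum_nonneg fun AB _ => hf G AB
    _ = _ := expectedConcepts_half_half_eq.symm

lemma pow_div_le_expectedConcepts_half_half {k : ℕ} (hk : 0 < k) (hkn : 4 * k ≤ n)
    (hlow : 2 * n ≤ 2 ^ k) (hup : 2 ^ k ≤ 4 * n) :
    ((n : ℝ) / (64 * k ^ 2)) ^ k / (2 * (n + 1)) ≤ expectedConcepts n (1 / 2) (1 / 2) := by
  set h := n / 2
  have hn : (0 : ℝ) < n := by exact_mod_cast (show 0 < n by omega)
  have hcentral : 1 / (n + 1 : ℝ) ≤ n.choose h / 2 ^ n := by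
    rw [div_le_div_iff₀ (by positivity) (by positivity), one_mul]
    exact_mod_cast (Nat.two_pow_le_succ_mul_choose_half n).trans_eq (mul_comm _ _)
  have hc : ((n : ℝ) / 4) ^ k ≤ k ^ k * (h.choose k : ℝ) := by
    have hsub : n ≤ 4 * (h + 1 - k) := by omega
    have := Nat.succ_sub_pow_le_pow_mul_choose h k
    calc ((n : ℝ) / 4) ^ k ≤ ((h + 1 - k : ℕ) : ℝ) ^ k := by
          gcongr
          rw [div_le_iff₀ (by norm_num)]
          exact_mod_cast hsub.trans_eq (mul_comm _ _)
      _ ≤ k ^ k * (h.choose k : ℝ) := by exact_mod_cast this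
  have hcc : (h.choose k : ℝ) ≤ (n - h).choose k := by
    exact_mod_cast Nat.choose_le_choose k (by omega)
  have hhalf : (1 : ℝ) / 2 ≤ 1 - n / 2 ^ k := by
    rw [le_sub_comm, div_le_iff₀ (by positivity)]
    have : (2 * n : ℝ) ≤ 2 ^ k := by exact_mod_cast hlow
    linarith
  have hsq : (2 : ℝ) ^ (k * k) ≤ (4 * n) ^ k := by
    rw [pow_mul]
    gcongr
    exact_mod_cast hup
  calc ((n : ℝ) / (64 * k ^ 2)) ^ k / (2 * (n + 1))
      = ((n / 4) ^ k) ^ 2 / ((k ^ k) ^ 2 * (4 * n) ^ k) / (2 * (n + 1)) := by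
        have hbase : (n : ℝ) / (64 * k ^ 2) = (n / 4) ^ 2 / (k ^ 2 * (4 * n)) := by
          field_simp
          ring
        rw [hbase, div_pow, mul_pow, pow_right_comm _ 2 k, pow_right_comm (k : ℝ) 2 k]
    _ ≤ (k ^ k * (h.choose k : ℝ)) ^ 2 / ((k ^ k) ^ 2 * 2 ^ (k * k)) / (2 * (n + 1)) := by
        gcongr
    _ = 1 / (n + 1) * ((h.choose k : ℝ) * h.choose k) * (1 / 2) / 2 ^ (k * k) := by
        field_simp
    _ ≤ n.choose h / 2 ^ n * ((h.choose k : ℝ) * (n - h).choose k) * (1 - n / 2 ^ k) /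
          2 ^ (k * k) := by
        gcongr
    _ = n.choose h * ((h.choose k : ℝ) * (n - h).choose k) *
          ((1 - n / 2 ^ k) / 2 ^ (n + k * k)) := by
        rw [pow_add]
        field_simp
    _ ≤ expectedConcepts n (1 / 2) (1 / 2) := choose_mul_le_expectedConcepts_half_half h k

end

lemma eventually_log_two_mul_add_two_le : ∀ᶠ L : ℝ in atTop, log (2 * L + 2) ≤ L / 100 := by
  have hlittle := Real.isLittleO_log_id_atTop.bound (show (0 : ℝ) < 1 / 500 by norm_num)
  have hlin : Tendsto (fun L : ℝ => 2 * L + 2) atTop atTop :=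
    tendsto_atTop_add_const_right _ 2 (tendsto_id.const_mul_atTop two_pos)
  filter_upwards [hlin.eventually hlittle, eventually_ge_atTop 1] with L hL hL1
  have hpos : 0 < 2 * L + 2 := by linarith
  rw [Real.norm_of_nonneg (Real.log_nonneg (by linarith)), id, Real.norm_of_nonneg hpos.le] at hL
  linarith

lemma log_le_mul_log_two_and_le {x : ℝ} (hx : 1 ≤ x) {k : ℕ} (hlow : x ≤ 2 ^ k)
    (hup : 2 ^ k ≤ 4 * x) : log x ≤ k * log 2 ∧ (k : ℝ) ≤ 2 * log x + 2 := by
  have hlog2 : 1 / 2 < log 2 := by linarith [Real.log_two_gt_d9]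
  have hk : k * log 2 ≤ log 4 + log x := by
    rw [← Real.log_pow, ← Real.log_mul (by norm_num) (by positivity)]
    exact Real.log_le_log (by positivity) hup
  rw [show (4 : ℝ) = 2 ^ 2 by norm_num, Real.log_pow, Nat.cast_ofNat] at hk
  refine ⟨?_, ?_⟩
  · rw [← Real.log_pow]
    exact Real.log_le_log (by positivity) hlow
  · rcases le_or_gt 2 k with h2k | h2k
    · have : (2 : ℝ) ≤ k := by exact_mod_cast h2k
      nlinarith [mul_le_mul_of_nonneg_left hlog2.le (sub_nonneg.2 this)]
    · have : (k : ℝ) < 2 := by exact_mod_cast h2k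
      linarith [Real.log_nonneg hx]

lemma rpow_log_lt_pow_div {n k : ℕ} (hn : 0 < n) (hL : 100 ≤ log n)
    (hloglog : log (2 * log n + 2) ≤ log n / 100) (hk_low : log n ≤ k * log 2)
    (hk_up : (k : ℝ) ≤ 2 * log n + 2) :
    (n : ℝ) ^ log n < ((n : ℝ) / (64 * k ^ 2)) ^ k / (2 * (n + 1)) := by
  set L := log (n : ℝ)
  have hn' : (1 : ℝ) ≤ n := by exact_mod_cast hn
  have hlog2 : log 2 < 7 / 10 := by linarith [Real.log_two_lt_d9]
  have hK : (10 / 7) * L ≤ k := by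
    by_contra! hcon
    nlinarith [Real.log_two_gt_d9]
  have hk0 : (0 : ℝ) < k := by linarith
  have hlogk : log k ≤ L / 100 := (Real.log_le_log hk0 hk_up).trans hloglog
  have hlog64 : log 64 = 6 * log 2 := by
    rw [show (64 : ℝ) = 2 ^ 6 by norm_num, Real.log_pow]; norm_num
  have hlog_succ : log (2 * (n + 1)) ≤ L + 2 := by
    calc log (2 * (n + 1)) ≤ log (2 ^ 2 * n) := Real.log_le_log (by positivity) (by linarith)
      _ = 2 * log 2 + L := by rw [Real.log_mul (by norm_num) (by positivity), Real.log_pow]; rfl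
      _ ≤ L + 2 := by linarith
  have hrhs : log (((n : ℝ) / (64 * k ^ 2)) ^ k / (2 * (n + 1))) =
      k * (L - 6 * log 2 - 2 * log k) - log (2 * (n + 1)) := by
    rw [Real.log_div (by positivity) (by positivity), Real.log_pow,
      Real.log_div (by positivity) (by positivity), Real.log_mul (by norm_num) (by positivity),
      Real.log_pow, hlog64]
    push_cast
    ring
  rw [← Real.log_lt_log_iff (by positivity) (by positivity), Real.log_rpow (by positivity), hrhs]
  have hgap : 0 ≤ L - 6 * log 2 - 2 * log k - L / 2 := by linarith
  nlinarith [mul_le_mul_of_nonneg_right hK hgap]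

/-- For `K_n ~ κ_{n,1/2,1/2}`, the expected number of formal concepts
satisfies `E[|𝔅(K_n)|] > n^{log n}` for all sufficiently large `n`. -/
theorem expected_concepts_gt_superpolynomial :
    ∀ᶠ n : ℕ in Filter.atTop,
      expectedConcepts n (1 / 2) (1 / 2) > (n : ℝ) ^ Real.log n := by
  have hlog : Tendsto (fun n : ℕ => log (n : ℝ)) atTop atTop :=
    Real.tendsto_log_atTop.comp tendsto_natCast_atTop_atTop
  filter_upwards [eventually_gt_atTop 0, hlog.eventually (eventually_ge_atTop 100),
    hlog.eventually eventually_log_two_mul_add_two_le] with n hn hL hloglog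
  set k := Nat.log 2 n + 2
  obtain ⟨hlow, hup⟩ := Nat.two_mul_le_two_pow_log_add_two hn.ne'
  have hn1 : (1 : ℝ) ≤ n := by exact_mod_cast hn
  obtain ⟨hk_low, hk_up⟩ := log_le_mul_log_two_and_le hn1 (k := k)
    (by exact_mod_cast (Nat.le_mul_of_pos_left n two_pos).trans hlow) (by exact_mod_cast hup)
  have hkn : 4 * k ≤ n := by
    have hL0 : (0 : ℝ) ≤ log n := by linarith
    have : (4 * k : ℝ) ≤ n := calc
      (4 * k : ℝ) ≤ 1 + log n + log n ^ 2 / 2 := by nlinarith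
      _ ≤ n := (Real.quadratic_le_exp_of_nonneg hL0).trans_eq (Real.exp_log (by positivity))
    exact_mod_cast this
  exact (rpow_log_lt_pow_div hn hL hloglog hk_low hk_up).trans_le
    (pow_div_le_expectedConcepts_half_half (by omega) hkn hlow hup)
end

section
/- With a_n = ⌊log n / log 2⌋, b_n = ⌊log n / log 2⌋ + 2{n/2}, c_n = d_n = ⌊n/2⌋ − ⌊log n / log 2⌋, and t_n = C(n; a_n, b_n, c_n, d_n) · (1/2)^{a_n + c_n} (1/2)^{b_n + d_n} (1/2)^{a_n b_n} (1 − 2^{−a_n})^{d_n} (1 − 2^{−b_n})^{c_n}, one has the asymptotic equivalence log t_n = (log² n / log 2) · (1 + o(1)) as n → ∞; that is, (log t_n) / (log² n / log 2) → 1 as n → ∞. -/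
/-- `a_n = ⌊log n / log 2⌋` (integer part; `log` is the natural logarithm). -/
noncomputable def aSeq (n : ℕ) : ℕ := ⌊Real.log n / Real.log 2⌋₊

/-- `b_n = ⌊log n / log 2⌋ + 2{n/2}`, where `2{n/2}` is `0` if `n` is even and `1` if odd. -/
noncomputable def bSeq (n : ℕ) : ℕ := aSeq n + n % 2

/-- `c_n = d_n = ⌊n/2⌋ − ⌊log n / log 2⌋`. -/
noncomputable def cSeq (n : ℕ) : ℕ := n / 2 - aSeq n

/-- The multinomial coefficient `C(n; a_n, b_n, c_n, d_n) = n!/(a_n! b_n! c_n! d_n!)`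
(the subtraction `c_n = ⌊n/2⌋ − a_n` is exact and `a_n + b_n + c_n + d_n = n`). -/
noncomputable def multinomialSeq (n : ℕ) : ℝ :=
  (n.factorial : ℝ) /
    ((aSeq n).factorial * (bSeq n).factorial * (cSeq n).factorial * (cSeq n).factorial)

/-- The singled-out term
`t_n = C(n; a_n,b_n,c_n,d_n) (1/2)^{a_n+c_n} (1/2)^{b_n+d_n} (1/2)^{a_n b_n}
       (1 − 2^{−a_n})^{d_n} (1 − 2^{−b_n})^{c_n}` with `d_n = c_n`. -/
noncomputable def tSeq (n : ℕ) : ℝ :=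
  multinomialSeq n *
    ((1 / 2 : ℝ) ^ (aSeq n + cSeq n) * (1 / 2 : ℝ) ^ (bSeq n + cSeq n) *
      (1 / 2 : ℝ) ^ (aSeq n * bSeq n) *
      (1 - (2 : ℝ) ^ (-(aSeq n : ℤ))) ^ cSeq n *
      (1 - (2 : ℝ) ^ (-(bSeq n : ℤ))) ^ cSeq n)

/-! By `a + b + 2c = n` the multinomial coefficient factors as `C(n, a) C(b + 2c, b) C(2c, c)`.
As `2^a ≤ n < 2^{a+1}`, the numbers `n + 1 - a` and `2c + 1` are at least `n / 2`, so
`log C(n, a) = a log n + O(a log a)` and `log C(b + 2c, b) = b log n + O(b log b)`; next,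
`log C(2c, c) = 2c log 2 + O(log n)` cancels the powers `(1/2)^{2c}`, and `c < 2^a` keeps the
factors `(1 - 2^{-a})^c`, `(1 - 2^{-b})^c` bounded. What remains,
`(a + b)(log n - log 2) - ab log 2`, is `log² n / log 2 + O(log n)` because
`a log 2 ≤ log n < (a + 1) log 2` and `b ∈ {a, a + 1}`.
Since `a, b = O(log n)`, all errors are `O(log n log log n) = o(log² n)`. -/

open Real Filter Asymptotics

lemma four_mul_le_two_pow {k : ℕ} (hk : 4 ≤ k) : 4 * k ≤ 2 ^ k := by
  induction k, hk using Nat.le_induction with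
  | base => norm_num
  | succ k hk ih =>
    have : 2 ^ 4 ≤ 2 ^ k := Nat.pow_le_pow_right two_pos hk
    rw [pow_succ]; omega

lemma log_natCast_le_log_natCast {m n : ℕ} (h : m ≤ n) : log m ≤ log n := by
  rcases m.eq_zero_or_pos with rfl | hm
  · simpa using log_natCast_nonneg n
  · exact log_le_log (by exact_mod_cast hm) (by exact_mod_cast h)

lemma abs_log_one_sub_le {x : ℝ} (hx₀ : 0 ≤ x) (hx : x ≤ 1 / 2) :
    |log (1 - x)| ≤ 2 * x := by
  have hpos : 0 < 1 - x := by linarith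
  rw [abs_of_nonpos (log_nonpos hpos.le (by linarith))]
  have h := one_sub_inv_le_log_of_pos hpos
  have hinv : (1 - x)⁻¹ ≤ 1 + 2 * x := by
    rw [inv_le_iff_one_le_mul₀ hpos]; nlinarith
  linarith

lemma abs_mul_log_one_sub_inv_two_pow_le {c k : ℕ} (hk : 1 ≤ k) (hc : c ≤ 2 ^ k) :
    |c * log (1 - (2 ^ k : ℝ)⁻¹)| ≤ 2 := by
  have hpow : (2 : ℝ) ≤ 2 ^ k := le_self_pow₀ one_le_two (by omega)
  have hx : (2 ^ k : ℝ)⁻¹ ≤ 1 / 2 := by rw [one_div]; exact inv_anti₀ two_pos hpow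
  calc |c * log (1 - (2 ^ k : ℝ)⁻¹)| ≤ c * (2 * (2 ^ k : ℝ)⁻¹) := by
        rw [abs_mul, Nat.abs_cast]
        exact mul_le_mul_of_nonneg_left (abs_log_one_sub_le (by positivity) hx) c.cast_nonneg
    _ = 2 * (c / 2 ^ k) := by ring
    _ ≤ 2 * 1 := by
        gcongr
        exact div_le_one_of_le₀ (by exact_mod_cast hc) (by positivity)
    _ = 2 := mul_one 2

lemma log_choose_le_mul_log (m k : ℕ) : log (m.choose k) ≤ k * log m := by
  rcases (m.choose k).eq_zero_or_pos with h | h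
  · rw [h, Nat.cast_zero, log_zero]
    exact mul_nonneg k.cast_nonneg (log_natCast_nonneg m)
  · rw [← log_pow]
    exact log_le_log (by exact_mod_cast h) (by exact_mod_cast m.choose_le_pow k)

lemma mul_log_sub_log_le_log_choose {m k : ℕ} (hk : k ≤ m) :
    k * (log (m + 1 - k : ℕ) - log k) ≤ log (m.choose k) := by
  rcases k.eq_zero_or_pos with rfl | hk₀
  · simp
  have hbase : (0 : ℝ) < (m + 1 - k : ℕ) := by exact_mod_cast (by omega : 0 < m + 1 - k)
  have hfac : (k.factorial : ℝ) ≤ (k : ℝ) ^ k := by exact_mod_cast k.factorial_le_pow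
  calc k * (log (m + 1 - k : ℕ) - log k)
        = log (((m + 1 - k : ℕ) : ℝ) ^ k / (k : ℝ) ^ k) := by
        rw [log_div (by positivity) (by positivity), log_pow, log_pow]; ring
    _ ≤ log (((m + 1 - k : ℕ) : ℝ) ^ k / k.factorial) :=
        log_le_log (by positivity) (div_le_div_of_nonneg_left (by positivity) (by positivity) hfac)
    _ ≤ log (m.choose k) := log_le_log (by positivity) (Nat.pow_le_choose k m)

lemma abs_log_choose_sub_mul_log_le {m n k : ℕ} (hk : k ≤ m) (hm : m ≤ n)
    (hn : n ≤ 2 * (m + 1 - k)) : |log (m.choose k) - k * log n| ≤ k * (log 2 + log k) := by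
  have hupper : log (m.choose k) ≤ k * log n :=
    (log_choose_le_mul_log m k).trans
      (mul_le_mul_of_nonneg_left (log_natCast_le_log_natCast hm) k.cast_nonneg)
  have hn' : log n ≤ log 2 + log (m + 1 - k : ℕ) := by
    have hne : ((m + 1 - k : ℕ) : ℝ) ≠ 0 := by exact_mod_cast (by omega : m + 1 - k ≠ 0)
    calc log n ≤ log (2 * (m + 1 - k) : ℕ) := log_natCast_le_log_natCast hn
      _ = log 2 + log (m + 1 - k : ℕ) := by
        rw [Nat.cast_mul, Nat.cast_ofNat, log_mul two_ne_zero hne]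
  have hlower := mul_log_sub_log_le_log_choose hk
  rw [abs_le]
  constructor <;> nlinarith [k.cast_nonneg (α := ℝ)]

lemma abs_log_centralBinom_sub_le (c : ℕ) :
    |log c.centralBinom - 2 * c * log 2| ≤ log (2 * c) := by
  rcases c.eq_zero_or_pos with rfl | hc
  · simp
  have hpos : (0 : ℝ) < c.centralBinom := by exact_mod_cast c.centralBinom_pos
  have hlog4 : log ((4 : ℝ) ^ c) = 2 * c * log 2 := by
    rw [log_pow, show (4 : ℝ) = 2 ^ 2 by norm_num, log_pow]; push_cast; ring
  have hupper : log c.centralBinom ≤ 2 * c * log 2 := by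
    rw [← hlog4]
    exact log_le_log hpos (by exact_mod_cast c.centralBinom_le_four_pow)
  have hlower : 2 * c * log 2 ≤ log (2 * c) + log c.centralBinom := by
    rw [← hlog4, ← log_mul (by positivity) hpos.ne']
    exact log_le_log (by positivity)
      (by exact_mod_cast c.four_pow_le_two_mul_self_mul_centralBinom hc)
  rw [abs_le]
  constructor <;> linarith [log_nonneg (by exact_mod_cast hc : (1 : ℝ) ≤ c)]

lemma factorial_div_eq_choose_mul_choose_mul_centralBinom (a b c : ℕ) :
    ((a + b + 2 * c).factorial : ℝ) / (a.factorial * b.factorial * c.factorial * c.factorial) =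
      (a + b + 2 * c).choose a * (b + 2 * c).choose b * c.centralBinom := by
  have h₁ := Nat.add_choose_mul_factorial_mul_factorial (b + 2 * c) a
  have h₂ := Nat.add_choose_mul_factorial_mul_factorial (2 * c) b
  have h₃ := Nat.add_choose_mul_factorial_mul_factorial c c
  rw [← two_mul, ← Nat.centralBinom_eq_two_mul_choose] at h₃
  rw [add_comm (b + 2 * c), ← add_assoc] at h₁
  rw [add_comm (2 * c)] at h₂
  rw [div_eq_iff (by positivity), ← h₁, ← h₂, ← h₃]
  push_cast
  ring

lemma abs_main_term_sub_le {a b L l : ℝ} (hl : 0 < l) (ha₀ : 0 ≤ a) (ha : a * l ≤ L)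
    (ha' : L < (a + 1) * l) (hab : a ≤ b) (hb : b ≤ a + 1) :
    |(a + b) * (L - l) - a * b * l - L ^ 2 / l| ≤ (a + b + 1) * l := by
  have hid : (a + b) * (L - l) - a * b * l - L ^ 2 / l =
      -((L - a * l) * (L - b * l) / l) - (a + b) * l := by
    field_simp; ring
  have hprod : |(L - a * l) * (L - b * l)| ≤ l * l := by
    have h₁ : |L - a * l| ≤ l := abs_le.mpr ⟨by nlinarith, by nlinarith⟩
    have h₂ : |L - b * l| ≤ l := abs_le.mpr ⟨by nlinarith, by nlinarith⟩
    rw [abs_mul]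
    exact mul_le_mul h₁ h₂ (abs_nonneg _) hl.le
  rw [hid]
  calc |-((L - a * l) * (L - b * l) / l) - (a + b) * l|
      ≤ |(L - a * l) * (L - b * l)| / l + (a + b) * l := by
        refine (abs_sub _ _).trans ?_
        rw [abs_neg, abs_div, abs_of_pos hl, abs_of_nonneg (by nlinarith : 0 ≤ (a + b) * l)]
    _ ≤ l * l / l + (a + b) * l := by gcongr
    _ = (a + b + 1) * l := by field_simp; ring

lemma isLittleO_mul_log_of_isBigO {α : Type*} {l : Filter α} {f g : α → ℝ}
    (hf : Tendsto f l atTop) (hfg : f =O[l] g) :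
    (fun x ↦ f x * log (f x)) =o[l] (fun x ↦ g x ^ 2) := by
  have hlog : (fun x ↦ log (f x)) =o[l] g :=
    (isLittleO_log_id_atTop.comp_tendsto hf).trans_isBigO hfg
  simpa only [sq] using hfg.mul_isLittleO hlog

lemma aSeq_eq_log (n : ℕ) : aSeq n = Nat.log 2 n := by
  rw [aSeq, log_div_log]
  exact_mod_cast natFloor_logb_natCast 2 n

lemma four_mul_aSeq_le {n : ℕ} (hn : 16 ≤ n) : 4 * aSeq n ≤ n := by
  rw [aSeq_eq_log]
  have h4 : 4 ≤ Nat.log 2 n := Nat.le_log_of_pow_le one_lt_two hn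
  exact (four_mul_le_two_pow h4).trans (Nat.pow_log_le_self 2 (by omega))

lemma cSeq_lt_two_pow_aSeq (n : ℕ) : cSeq n < 2 ^ aSeq n := by
  have h := Nat.lt_pow_succ_log_self one_lt_two n
  rw [← aSeq_eq_log, pow_succ] at h
  unfold cSeq; omega

lemma aSeq_mul_log_two_le (n : ℕ) : aSeq n * log 2 ≤ log n := by
  rw [← le_div_iff₀ (log_pos one_lt_two)]
  exact Nat.floor_le (div_nonneg (log_natCast_nonneg n) (log_nonneg one_le_two))

lemma log_lt_aSeq_add_one_mul_log_two (n : ℕ) : log n < (aSeq n + 1) * log 2 := by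
  rw [← div_lt_iff₀ (log_pos one_lt_two)]
  exact Nat.lt_floor_add_one _

lemma aSeq_le_bSeq (n : ℕ) : aSeq n ≤ bSeq n := Nat.le_add_right _ _

lemma bSeq_le_aSeq_add_one (n : ℕ) : bSeq n ≤ aSeq n + 1 := by
  unfold bSeq; omega

lemma aSeq_add_bSeq_add_two_mul_cSeq {n : ℕ} (h : 2 * aSeq n ≤ n) :
    aSeq n + bSeq n + 2 * cSeq n = n := by
  unfold bSeq cSeq; omega

lemma multinomialSeq_eq {n : ℕ} (h : 2 * aSeq n ≤ n) :
    multinomialSeq n = n.choose (aSeq n) * (bSeq n + 2 * cSeq n).choose (bSeq n) *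
      (cSeq n).centralBinom := by
  have := factorial_div_eq_choose_mul_choose_mul_centralBinom (aSeq n) (bSeq n) (cSeq n)
  rwa [aSeq_add_bSeq_add_two_mul_cSeq h] at this

lemma log_tSeq_eq {n : ℕ} (ha : 1 ≤ aSeq n) (h : 2 * aSeq n ≤ n) :
    log (tSeq n) = log (n.choose (aSeq n)) + log ((bSeq n + 2 * cSeq n).choose (bSeq n)) +
      log (cSeq n).centralBinom - (aSeq n + bSeq n + 2 * cSeq n) * log 2 -
      aSeq n * bSeq n * log 2 + cSeq n * log (1 - (2 ^ aSeq n : ℝ)⁻¹) +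
      cSeq n * log (1 - (2 ^ bSeq n : ℝ)⁻¹) := by
  have hpos : ∀ k : ℕ, 1 ≤ k → 0 < 1 - (2 ^ k : ℝ)⁻¹ := fun k hk ↦
    sub_pos.mpr (inv_lt_one_of_one_lt₀ (one_lt_pow₀ one_lt_two (by omega)))
  have hxa := hpos _ ha
  have hxb := hpos (bSeq n) (ha.trans (aSeq_le_bSeq n))
  have h₁ : (0 : ℝ) < n.choose (aSeq n) := by exact_mod_cast Nat.choose_pos (by omega)
  have h₂ : (0 : ℝ) < (bSeq n + 2 * cSeq n).choose (bSeq n) := by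
    exact_mod_cast Nat.choose_pos (by omega)
  have h₃ : (0 : ℝ) < (cSeq n).centralBinom := by exact_mod_cast (cSeq n).centralBinom_pos
  rw [tSeq, multinomialSeq_eq h]
  simp (disch := positivity) only [zpow_neg, zpow_natCast, log_mul, log_pow, one_div, log_inv]
  push_cast
  ring

lemma abs_log_tSeq_sub_le {n : ℕ} (hn : 16 ≤ n) :
    |log (tSeq n) - log n ^ 2 / log 2| ≤
      aSeq n * log (aSeq n) + bSeq n * log (bSeq n) + log 2 * (2 * (aSeq n + bSeq n) + 1) +
        log n + 4 := by
  -- `4a ≤ n` is what makes `n ≤ 2 (2c + 1)`, the hypothesis of `e₂` below.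
  have h4a := four_mul_aSeq_le hn
  have ha : 1 ≤ aSeq n := by
    rw [aSeq_eq_log]; exact Nat.le_log_of_pow_le one_lt_two (by omega)
  have hca := cSeq_lt_two_pow_aSeq n
  have hsum := aSeq_add_bSeq_add_two_mul_cSeq (by omega : 2 * aSeq n ≤ n)
  have hab := aSeq_le_bSeq n
  have hba := bSeq_le_aSeq_add_one n
  have hcb : 2 ^ aSeq n ≤ 2 ^ bSeq n := Nat.pow_le_pow_right two_pos hab
  have e₁ := abs_log_choose_sub_mul_log_le (m := n) (n := n) (k := aSeq n) (by omega) le_rfl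
    (by omega)
  have e₂ := abs_log_choose_sub_mul_log_le (m := bSeq n + 2 * cSeq n) (n := n) (k := bSeq n)
    (by omega) (by omega) (by omega)
  have e₃ : |log (cSeq n).centralBinom - 2 * cSeq n * log 2| ≤ log n :=
    (abs_log_centralBinom_sub_le _).trans
      (by exact_mod_cast log_natCast_le_log_natCast (by omega : 2 * cSeq n ≤ n))
  have e₄ := abs_mul_log_one_sub_inv_two_pow_le ha hca.le
  have e₅ := abs_mul_log_one_sub_inv_two_pow_le (by omega) (hca.le.trans hcb)
  have e₆ := abs_main_term_sub_le (log_pos one_lt_two) (Nat.cast_nonneg (aSeq n))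
    (aSeq_mul_log_two_le n) (log_lt_aSeq_add_one_mul_log_two n)
    (b := bSeq n) (by exact_mod_cast hab) (by exact_mod_cast hba)
  rw [log_tSeq_eq ha (by omega)]
  rw [abs_le] at *
  constructor <;> linarith

lemma tendsto_log_natCast_atTop : Tendsto (fun n : ℕ ↦ log n) atTop atTop :=
  tendsto_log_atTop.comp tendsto_natCast_atTop_atTop

lemma tendsto_aSeq_atTop : Tendsto (fun n ↦ (aSeq n : ℝ)) atTop atTop := by
  have hlower (n : ℕ) : log n / log 2 - 1 ≤ aSeq n := by
    have := log_lt_aSeq_add_one_mul_log_two n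
    rw [← div_lt_iff₀ (log_pos one_lt_two)] at this
    linarith
  refine tendsto_atTop_mono hlower (tendsto_atTop_add_const_right _ _ ?_)
  exact tendsto_log_natCast_atTop.atTop_div_const (log_pos one_lt_two)

lemma tendsto_bSeq_atTop : Tendsto (fun n ↦ (bSeq n : ℝ)) atTop atTop :=
  tendsto_atTop_mono (fun n ↦ Nat.cast_le.mpr (aSeq_le_bSeq n)) tendsto_aSeq_atTop

lemma isBigO_aSeq : (fun n ↦ (aSeq n : ℝ)) =O[atTop] (fun n ↦ log n) := by
  refine IsBigO.of_bound (log 2)⁻¹ (Eventually.of_forall fun n ↦ ?_)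
  rw [norm_of_nonneg (Nat.cast_nonneg _), norm_of_nonneg (log_natCast_nonneg n),
    ← div_eq_inv_mul, le_div_iff₀ (log_pos one_lt_two)]
  exact aSeq_mul_log_two_le n

lemma isBigO_bSeq : (fun n ↦ (bSeq n : ℝ)) =O[atTop] (fun n ↦ log n) := by
  refine IsBigO.trans ?_ isBigO_aSeq
  refine IsBigO.of_bound 2 ((tendsto_aSeq_atTop.eventually_ge_atTop 1).mono fun n ha ↦ ?_)
  have hb : (bSeq n : ℝ) ≤ aSeq n + 1 := by exact_mod_cast bSeq_le_aSeq_add_one n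
  rw [norm_of_nonneg (Nat.cast_nonneg _), norm_of_nonneg (Nat.cast_nonneg _)]
  linarith

lemma isLittleO_log_tSeq_sub :
    (fun n ↦ log (tSeq n) - log n ^ 2 / log 2) =o[atTop] (fun n ↦ log n ^ 2) := by
  have hone : (fun _ ↦ (1 : ℝ)) =O[atTop] (fun n : ℕ ↦ log n) :=
    ((isLittleO_one_left_iff ℝ).2
      (tendsto_norm_atTop_atTop.comp tendsto_log_natCast_atTop)).isBigO
  have hlog : (fun n : ℕ ↦ log n) =o[atTop] (fun n ↦ log n ^ 2) := by
    simpa [Function.comp_def] using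
      (isLittleO_pow_pow_atTop_of_lt one_lt_two).comp_tendsto tendsto_log_natCast_atTop
  have hlinear : (fun n ↦ log 2 * (2 * (aSeq n + bSeq n) + 1) + log n + 4) =O[atTop]
      (fun n : ℕ ↦ log n) :=
    (((((isBigO_aSeq.add isBigO_bSeq).const_mul_left 2).add hone).const_mul_left _).add
      (isBigO_refl _ _)).add (hone.const_mul_left 4 |>.congr_left fun _ ↦ mul_one _)
  have herror : (fun n ↦ aSeq n * log (aSeq n) + bSeq n * log (bSeq n) +
      log 2 * (2 * (aSeq n + bSeq n) + 1) + log n + 4) =o[atTop] (fun n : ℕ ↦ log n ^ 2) := by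
    simpa only [add_assoc] using
      (isLittleO_mul_log_of_isBigO tendsto_aSeq_atTop isBigO_aSeq).add
        ((isLittleO_mul_log_of_isBigO tendsto_bSeq_atTop isBigO_bSeq).add
          (hlinear.trans_isLittleO hlog))
  refine IsBigO.trans_isLittleO (IsBigO.of_bound' ?_) herror
  filter_upwards [eventually_ge_atTop 16] with n hn
  exact (abs_log_tSeq_sub_le hn).trans (le_abs_self _)

lemma isEquivalent_log_tSeq :
    (fun n ↦ log (tSeq n)) ~[atTop] (fun n : ℕ ↦ log n ^ 2 / log 2) :=
  isLittleO_log_tSeq_sub.trans_isBigO <|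
    (isBigO_const_mul_self (log 2) (fun n : ℕ ↦ log n ^ 2 / log 2) atTop).congr_left
      fun _ ↦ mul_div_cancel₀ _ (log_pos one_lt_two).ne'

/-- `log t_n = (log² n / log 2)(1 + o(1))` as `n → ∞`; that is,
`(log t_n)/(log² n / log 2) → 1`. -/
theorem log_tSeq_asymptotic :
    Filter.Tendsto (fun n : ℕ => Real.log (tSeq n) / (Real.log n ^ 2 / Real.log 2))
      Filter.atTop (nhds 1) := by
  have hne : ∀ᶠ n : ℕ in atTop, log n ^ 2 / log 2 ≠ 0 :=
    (tendsto_log_natCast_atTop.eventually_gt_atTop 0).mono fun _ hn ↦ by positivity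
  exact (isEquivalent_iff_tendsto_one hne).mp isEquivalent_log_tSeq
end

section
/- With c_n = ⌊n/2⌋ − ⌊log n / log 2⌋, one has log(c_n!) = (1/2) n log n − (1/2)(1 + log 2) n − log² n / log 2 + o(log² n) as n → ∞. -/
open Real Filter Asymptotics Topology


lemma stirling_log : Tendsto (fun m : ℕ => Real.log m.factorial -
    ((m : ℝ) * Real.log m - m + Real.log (Real.sqrt (2 * m * π)))) atTop (𝓝 0) := by
  have h := Stirling.factorial_isEquivalent_stirling
  rw [Asymptotics.isEquivalent_iff_tendsto_one ?hne] at h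
  case hne =>
    filter_upwards [eventually_ge_atTop 1] with m hm
    have : (0:ℝ) < m := by exact_mod_cast hm
    positivity
  have hlog := (Real.continuousAt_log one_ne_zero).tendsto.comp h
  rw [Real.log_one] at hlog
  refine hlog.congr' ?_
  filter_upwards [eventually_ge_atTop 1] with m hm
  have hm0 : (0:ℝ) < m := by exact_mod_cast hm
  have hfac : (0:ℝ) < m.factorial := by exact_mod_cast m.factorial_pos
  have hs : (0:ℝ) < Real.sqrt (2 * m * π) := Real.sqrt_pos.mpr (by positivity)
  have hp : (0:ℝ) < ((m:ℝ) / Real.exp 1) ^ m := by positivity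
  simp only [Function.comp_apply, Pi.div_apply]
  rw [Real.log_div hfac.ne' (by positivity), Real.log_mul hs.ne' hp.ne',
    Real.log_pow, Real.log_div hm0.ne' (Real.exp_pos 1).ne', Real.log_exp]
  ring

lemma aSeq_le (n : ℕ) : (aSeq n : ℝ) ≤ Real.log n / Real.log 2 :=
  Nat.floor_le (div_nonneg (Real.log_natCast_nonneg n) (Real.log_nonneg one_le_two))

lemma half_le_log_two : (1/2 : ℝ) ≤ Real.log 2 := by
  linarith [Real.log_two_gt_d9]

lemma aSeq_small : ∀ᶠ n : ℕ in atTop, (aSeq n : ℝ) ≤ n / 100 := by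
  have h := (Real.isLittleO_log_id_atTop.bound (by norm_num : (0:ℝ) < 1/400))
  have h2 := tendsto_natCast_atTop_atTop (R := ℝ) |>.eventually h
  filter_upwards [h2, eventually_ge_atTop 1] with n hn h1
  have hlog0 : 0 ≤ Real.log n := Real.log_natCast_nonneg n
  have hn0 : (0:ℝ) ≤ n := Nat.cast_nonneg n
  have hb : Real.log n ≤ (1/400) * n := by
    simpa [abs_of_nonneg hlog0, abs_of_nonneg hn0] using hn
  have hl2 : (1/2 : ℝ) ≤ Real.log 2 := half_le_log_two
  calc (aSeq n : ℝ) ≤ Real.log n / Real.log 2 := aSeq_le n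
    _ ≤ Real.log n / (1/2) := by
        apply div_le_div_of_nonneg_left hlog0 (by norm_num) hl2
    _ = 2 * Real.log n := by ring
    _ ≤ 2 * ((1/400) * n) := by linarith
    _ ≤ n / 100 := by linarith

lemma aSeq_le_nat : ∀ᶠ n : ℕ in atTop, 4 * aSeq n ≤ n := by
  filter_upwards [aSeq_small] with n h
  have : (4 * aSeq n : ℝ) ≤ n := by push_cast; nlinarith [Nat.cast_nonneg (α := ℝ) n]
  exact_mod_cast this

lemma cSeq_tendsto : Tendsto cSeq atTop atTop := by
  rw [tendsto_atTop]
  intro b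
  filter_upwards [aSeq_le_nat, eventually_ge_atTop (4*b+4)] with n h1 h2
  unfold cSeq; omega

lemma tendsto_log_nat : Tendsto (fun n : ℕ => Real.log n) atTop atTop :=
  Real.tendsto_log_atTop.comp tendsto_natCast_atTop_atTop


private lemma hlp1 {a l2 L : ℝ} (h0 : 0 ≤ a) (h1 : 1/2 ≤ l2) (h2 : a * l2 ≤ L) :
    a ≤ 2 * L := by nlinarith

private lemma hlp2 {x ρ n : ℝ} (h1 : x * n = 2*ρ) (h2 : ρ ≤ n/50) (h3 : 100 ≤ n) :
    x ≤ 1/2 := by nlinarith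

private lemma hlp3 {x : ℝ} (h0 : 0 ≤ x) (h1 : x ≤ 1/2) : 1 ≤ (1+2*x)*(1-x) := by
  nlinarith

private lemma hlp4 {c x ρ n L E : ℝ} (h1 : c * (-(2*x)) ≤ c * E)
    (h2 : c * x ≤ (n/2) * x) (h3 : x * n = 2*ρ) (h4 : ρ ≤ 3*L) :
    -(6*L) ≤ c * E := by nlinarith

private lemma hlp5 {u L : ℝ} (h1 : u ≤ 1) (h2 : 0 ≤ L) : u * L ≤ L := by nlinarith

private lemma hlp6 {ρ l2 L : ℝ} (h1 : ρ ≤ 3*L) (h2 : l2 ≤ 1) (h3 : 0 ≤ ρ)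
    (h4 : 0 ≤ L) : ρ*(l2+1) ≤ 6*L := by nlinarith

private lemma hlp7 {c : ℝ} (h1 : 1 ≤ c) (hpi : 3 ≤ π) : 1 ≤ 2*c*π := by nlinarith

private lemma hlp8 {c n : ℝ} (h1 : c ≤ n/2) (h2 : 0 < c) (hpi : π ≤ 4) :
    2*c*π ≤ 4*n := by nlinarith

set_option maxHeartbeats 1600000 in
lemma key_bound : ∀ᶠ n : ℕ in atTop,
    |Real.log ((cSeq n).factorial) -
        ((1 / 2) * n * Real.log n - (1 / 2) * (1 + Real.log 2) * n -
          Real.log n ^ 2 / Real.log 2)| ≤ 20 * Real.log n := by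
  have hst := stirling_log.comp cSeq_tendsto
  have he : ∀ᶠ n : ℕ in atTop, |Real.log ((cSeq n).factorial) -
      ((cSeq n : ℝ) * Real.log (cSeq n) - (cSeq n) +
        Real.log (Real.sqrt (2 * (cSeq n) * π)))| ≤ 1 := by
    have h01 : ∀ᶠ y : ℝ in 𝓝 0, |y| ≤ 1 := by
      filter_upwards [Metric.ball_mem_nhds (0:ℝ) one_pos] with y hy
      simpa [Real.dist_eq] using le_of_lt (mem_ball_iff_norm.mp hy)
    exact hst.eventually h01
  filter_upwards [he, aSeq_small, aSeq_le_nat, eventually_ge_atTop 100,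
    tendsto_log_nat.eventually_ge_atTop 1] with n he hA h4a hn100 hL1
  set L := Real.log (n : ℝ) with hLdef
  set l2 := Real.log 2 with hl2def
  set a := (aSeq n : ℝ) with hadef
  set c := ((cSeq n : ℕ) : ℝ) with hcdef
  set S := Real.log (Real.sqrt (2 * c * π)) with hSdef
  set m := ((n % 2 : ℕ) : ℝ) with hmdef
  have hl2a : (1/2 : ℝ) ≤ l2 := half_le_log_two
  have hl2b : l2 ≤ 1 := by rw [hl2def]; linarith [Real.log_two_lt_d9]
  have hl2pos : (0:ℝ) < l2 := by linarith
  have hL0 : (0:ℝ) ≤ L := by linarith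
  have hn100R : (100:ℝ) ≤ n := by exact_mod_cast hn100
  have hn0 : (0:ℝ) < n := by linarith
  have hm0 : (0:ℝ) ≤ m := Nat.cast_nonneg _
  have hm1 : m ≤ 1 := by
    rw [hmdef]; exact_mod_cast Nat.le_of_lt_succ (Nat.mod_lt n (by norm_num))
  have ha0 : (0:ℝ) ≤ a := Nat.cast_nonneg _
  have ha1 : a * l2 ≤ L := (le_div_iff₀ hl2pos).mp (aSeq_le n)
  have ha2 : L < (a + 1) * l2 := (div_lt_iff₀ hl2pos).mp (Nat.lt_floor_add_one _)
  have ha2L : a ≤ 2 * L := hlp1 ha0 hl2a ha1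
  have hρ3L : a + m/2 ≤ 3 * L := by linarith
  have hρn : a + m/2 ≤ (n:ℝ)/50 := by linarith
  have hρ0 : (0:ℝ) ≤ a + m/2 := by linarith
  have hdiv : 2*((n/2:ℕ):ℝ) + m = n := by
    rw [hmdef]; exact_mod_cast Nat.div_add_mod n 2
  have hsub : c = ((n/2:ℕ):ℝ) - a := by
    rw [hcdef, show cSeq n = n/2 - aSeq n from rfl,
      Nat.cast_sub (by omega : aSeq n ≤ n/2)]
  have hceq : c = (n:ℝ)/2 - (a + m/2) := by linear_combination hsub + hdiv / 2
  have hcge : (n:ℝ)/4 ≤ c := by linarith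
  have hcpos : (0:ℝ) < c := by linarith
  have hc1 : (1:ℝ) ≤ c := by linarith
  have hcle : c ≤ (n:ℝ)/2 := by linarith
  set x := 2*(a + m/2)/(n:ℝ) with hxdef
  have hxn : x * n = 2*(a + m/2) := by rw [hxdef]; field_simp
  have hx0 : (0:ℝ) ≤ x := by positivity
  have hx : x ≤ 1/2 := hlp2 hxn (by linarith) hn100R
  have h1x : (0:ℝ) < 1 - x := by linarith
  have hcx : c = ((n:ℝ)/2)*(1-x) := by
    rw [hceq, hxdef]; field_simp
  have hlogc : Real.log c = L - l2 + Real.log (1-x) := by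
    rw [hcx, Real.log_mul (by positivity) h1x.ne',
      Real.log_div hn0.ne' two_ne_zero]
  have hE0 : Real.log (1-x) ≤ 0 := Real.log_nonpos (by linarith) (by linarith)
  have hE2 : -(2*x) ≤ Real.log (1-x) := by
    have h := Real.log_le_sub_one_of_pos (show (0:ℝ) < (1-x)⁻¹ by positivity)
    rw [Real.log_inv] at h
    have hkey : (1-x)⁻¹ ≤ 1 + 2*x := by
      rw [inv_eq_one_div, div_le_iff₀ h1x]; exact hlp3 hx0 hx
    linarith
  have ht4a : c * Real.log (1-x) ≤ 0 := mul_nonpos_of_nonneg_of_nonpos hcpos.le hE0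
  have ht4b : -(6*L) ≤ c * Real.log (1-x) := by
    have h1 : c * (-(2*x)) ≤ c * Real.log (1-x) :=
      mul_le_mul_of_nonneg_left hE2 hcpos.le
    have h2 : c * x ≤ ((n:ℝ)/2) * x := mul_le_mul_of_nonneg_right hcle hx0
    exact hlp4 h1 h2 hxn hρ3L
  have hS0 : 0 ≤ S := by
    rw [hSdef]
    apply Real.log_nonneg
    rw [show (1:ℝ) = Real.sqrt 1 by simp]
    apply Real.sqrt_le_sqrt
    exact hlp7 hc1 Real.pi_gt_three.le
  have hS2 : S ≤ 2 * L := by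
    rw [hSdef, Real.log_sqrt (by positivity)]
    have h1 : Real.log (2*c*π) ≤ Real.log (4*n) := by
      apply Real.log_le_log (by positivity)
      exact hlp8 hcle hcpos Real.pi_le_four
    have h2 : Real.log (4*(n:ℝ)) = Real.log 4 + L := by
      rw [Real.log_mul (by norm_num) hn0.ne']
    have h3 : Real.log 4 ≤ 2 := by
      rw [show (4:ℝ) = 2^2 by norm_num, Real.log_pow]; push_cast; linarith
    linarith
  have hid : c * Real.log c - c - ((1/2)*n*L - (1/2)*(1+l2)*n - L^2/l2)
      = (L/l2 - a)*L - (m/2)*L + (a + m/2)*(l2+1) + c * Real.log (1-x) := by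
    rw [hlogc]
    rw [hceq]
    field_simp
    ring
  have ht1a : 0 ≤ (L/l2 - a)*L :=
    mul_nonneg (by rw [sub_nonneg]; exact (le_div_iff₀ hl2pos).mpr ha1) hL0
  have ht1b : (L/l2 - a)*L ≤ L := by
    have h5 : L/l2 ≤ a + 1 := (div_le_iff₀ hl2pos).mpr ha2.le
    exact hlp5 (by linarith) hL0
  have ht2a : 0 ≤ (m/2)*L := by positivity
  have ht2b : (m/2)*L ≤ L := hlp5 (by linarith) hL0
  have ht3a : 0 ≤ (a + m/2)*(l2+1) := by positivity
  have ht3b : (a + m/2)*(l2+1) ≤ 6*L := hlp6 hρ3L hl2b hρ0 hL0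
  have hsplit : Real.log ((cSeq n).factorial) -
      ((1 / 2) * n * L - (1 / 2) * (1 + l2) * n - L ^ 2 / l2)
      = (Real.log ((cSeq n).factorial) - (c * Real.log c - c + S)) +
        ((L/l2 - a)*L - (m/2)*L + (a + m/2)*(l2+1) + c * Real.log (1-x) + S) := by
    linear_combination hid
  rw [hsplit]
  rw [abs_le] at he ⊢
  constructor <;> linarith [he.1, he.2]


/-- With `c_n = ⌊n/2⌋ − ⌊log n / log 2⌋`,
`log(c_n!) = (1/2) n log n − (1/2)(1 + log 2) n − log² n / log 2 + o(log² n)`. -/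
theorem log_factorial_cSeq_asymptotic :
    (fun n : ℕ => Real.log ((cSeq n).factorial) -
        ((1 / 2) * n * Real.log n - (1 / 2) * (1 + Real.log 2) * n -
          Real.log n ^ 2 / Real.log 2))
      =o[Filter.atTop] fun n : ℕ => Real.log n ^ 2 := by
  have hO : (fun n : ℕ => Real.log ((cSeq n).factorial) -
      ((1 / 2) * n * Real.log n - (1 / 2) * (1 + Real.log 2) * n -
        Real.log n ^ 2 / Real.log 2)) =O[atTop] fun n : ℕ => Real.log n := by
    rw [Asymptotics.isBigO_iff]
    refine ⟨20, ?_⟩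
    filter_upwards [key_bound, tendsto_log_nat.eventually_ge_atTop 0] with n h hL
    simpa [Real.norm_eq_abs, abs_of_nonneg hL] using h
  have ho : (fun n : ℕ => Real.log n) =o[atTop] fun n : ℕ => Real.log n ^ 2 := by
    rw [Asymptotics.isLittleO_iff]
    intro ε hε
    filter_upwards [tendsto_log_nat.eventually_ge_atTop (max 1 (1/ε))] with n hL
    have h1 : 1 ≤ Real.log n := le_trans (le_max_left _ _) hL
    have h2 : 1/ε ≤ Real.log n := le_trans (le_max_right _ _) hL
    have h3 : 1 ≤ ε * Real.log n := by
      rw [div_le_iff₀ hε] at h2; linarith [h2]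
    rw [Real.norm_eq_abs, Real.norm_eq_abs, abs_of_nonneg (by linarith),
      abs_of_nonneg (by positivity)]
    nlinarith
  exact hO.trans_isLittleO ho
end

section
/- Let n be a positive integer and let K_n be a random formal context distributed according to κ_{n,1/2,1/2}. With a_n = ⌊log n / log 2⌋, b_n = ⌊log n / log 2⌋ + 2{n/2}, c_n = d_n = ⌊n/2⌋ − ⌊log n / log 2⌋, and t_n = C(n; a_n, b_n, c_n, d_n) · (1/2)^{a_n + c_n} (1/2)^{b_n + d_n} (1/2)^{a_n b_n} (1 − 2^{−a_n})^{d_n} (1 − 2^{−b_n})^{c_n}, the expected number of formal concepts satisfies E[|𝔅(K_n)|] ≥ t_n. -/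
/-!
For `p = q = 1/2` every context with object set `G` has the same weight
`2^-(n + |G| (n - |G|))`, so the expectation is at least this weight times the number of pairs
(incidence relation, concept `(A, B)`) with `|G| = a + c`, `|A| = a`, `|B| = b`, summed over `G`.
For fixed `A ⊆ G` and `B ⊆ M`, the pair `(A, B)` is a concept exactly when the rows of `A`
contain `B`, every row of `G \ A` misses an attribute of `B`, and every column of `M \ B` misses
an object of `A`. These are independent conditions on the disjoint blocks "row restricted to `B`"
and "column outside `B`", so they hold for `(2^b - 1)^c (2^(a+c) - 2^c)^d` relations. Multiplying
out gives the term `t_n` for `(a, b, c, d) = (a_n, b_n, c_n, c_n)`, which is admissible because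
`a_n = ⌊log₂ n⌋ ≤ ⌊n/2⌋`.
-/

open Finset

theorem subset_filter_iff_of_forall_mem {β : Type*} {q : β → Prop} [DecidablePred q]
    {w I : Finset β} (hw : ∀ z ∈ w, q z) : w ⊆ {z ∈ I | q z} ↔ w ⊆ I :=
  ⟨fun h => h.trans (filter_subset _ _), fun h z hz => mem_filter.mpr ⟨h hz, hw z hz⟩⟩

section

variable {α β : Type*} [DecidableEq β]

theorem card_filter_powerset_forall_fiber [DecidableEq α] (k : β → α) {s : Finset α}
    {u : Finset β} (hu : ∀ y ∈ u, k y ∈ s)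
    (p : α → Finset β → Prop) [∀ x, DecidablePred (p x)] :
    #{I ∈ u.powerset | ∀ x ∈ s, p x {z ∈ I | k z = x}} =
      ∏ x ∈ s, #{J ∈ {z ∈ u | k z = x}.powerset | p x J} := by
  set t : α → Finset (Finset β) := fun x => {J ∈ {z ∈ u | k z = x}.powerset | p x J}
  have fiber_biUnion : ∀ f ∈ s.pi t, ∀ x (hx : x ∈ s),
      {z ∈ s.attach.biUnion (fun y => f y.1 y.2) | k z = x} = f x hx := by
    intro f hf x hx
    have hft : ∀ y (hy : y ∈ s), f y hy ⊆ {z ∈ u | k z = y} := fun y hy =>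
      mem_powerset.mp (mem_filter.mp (mem_pi.mp hf y hy)).1
    ext z
    simp only [mem_filter, mem_biUnion, mem_attach, true_and, Subtype.exists]
    constructor
    · rintro ⟨⟨y, hy, hz⟩, rfl⟩
      obtain rfl : k z = y := (mem_filter.mp (hft y hy hz)).2
      exact hz
    · intro hz
      exact ⟨⟨x, hx, hz⟩, (mem_filter.mp (hft x hx hz)).2⟩
  rw [← card_pi]
  refine card_bij' (fun I _ x _ => {z ∈ I | k z = x})
    (fun f _ => s.attach.biUnion (fun y => f y.1 y.2)) ?_ ?_ ?_ ?_
  · intro I hI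
    rw [mem_filter, mem_powerset] at hI
    exact mem_pi.mpr fun x hx => mem_filter.mpr
      ⟨mem_powerset.mpr (filter_subset_filter _ hI.1), hI.2 x hx⟩
  · intro f hf
    refine mem_filter.mpr ⟨mem_powerset.mpr fun z hz => ?_,
      fun x hx => fiber_biUnion f hf x hx ▸ (mem_filter.mp (mem_pi.mp hf x hx)).2⟩
    obtain ⟨y, -, hz⟩ := mem_biUnion.mp hz
    exact (mem_filter.mp ((mem_powerset.mp (mem_filter.mp (mem_pi.mp hf y y.2)).1) hz)).1
  · intro I hI
    have hIu := mem_powerset.mp (mem_filter.mp hI).1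
    ext z
    simp only [mem_biUnion, mem_attach, true_and, Subtype.exists, mem_filter]
    exact ⟨fun ⟨_, _, hz, _⟩ => hz, fun hz => ⟨k z, hu z (hIu hz), hz, rfl⟩⟩
  · intro f hf
    funext x hx
    exact fiber_biUnion f hf x hx

theorem card_filter_powerset_superset {w v : Finset β} (h : w ⊆ v) :
    #{J ∈ v.powerset | w ⊆ J} = 2 ^ (#v - #w) := by
  rw [← card_Icc_finset h]
  congr 1
  ext J
  simp [and_comm]

theorem card_filter_powerset_not_superset {w v : Finset β} (h : w ⊆ v) :
    #{J ∈ v.powerset | ¬ w ⊆ J} = 2 ^ #v - 2 ^ (#v - #w) := by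
  have := card_filter_add_card_filter_not (s := v.powerset) (w ⊆ ·)
  rw [card_filter_powerset_superset h, card_powerset] at this
  omega

theorem card_filter_powerset_iff_superset (P : Prop) [Decidable P] (v : Finset β) :
    #{J ∈ v.powerset | P ↔ v ⊆ J} = if P then 1 else 2 ^ #v - 1 := by
  by_cases hP : P
  · simpa [hP] using card_filter_powerset_superset (subset_refl v)
  · simpa [hP] using card_filter_powerset_not_superset (subset_refl v)

def cellBlock (B : Finset β) (z : α × β) : α ⊕ β :=
  if z.2 ∈ B then .inl z.1 else .inr z.2

theorem cellBlock_mem_disjSum {G : Finset α} {M B : Finset β} {z : α × β} (hz : z ∈ G ×ˢ M) :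
    cellBlock B z ∈ G.disjSum (M \ B) := by
  rw [mem_product] at hz
  by_cases hm : z.2 ∈ B <;> simp [cellBlock, hm, hz]

theorem filter_cellBlock_eq_inl [DecidableEq α] {G : Finset α} {M B : Finset β} (hB : B ⊆ M)
    {g : α} (hg : g ∈ G) : {z ∈ G ×ˢ M | cellBlock B z = .inl g} = {g} ×ˢ B := by
  ext ⟨g', m⟩
  rw [mem_filter]
  simp only [cellBlock, mem_product, mem_singleton]
  split_ifs <;> grind

theorem filter_cellBlock_eq_inr [DecidableEq α] {G : Finset α} {M B : Finset β} {m : β}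
    (hm : m ∈ M \ B) :
    {z ∈ G ×ˢ M | cellBlock B z = .inr m} = G ×ˢ {m} := by
  ext ⟨g, m'⟩
  rw [mem_filter]
  simp only [cellBlock, mem_product, mem_singleton, mem_sdiff] at hm ⊢
  split_ifs <;> grind

theorem card_incidences_rows_cols [DecidableEq α] {G A : Finset α} {M B : Finset β} (hA : A ⊆ G)
    (hB : B ⊆ M) :
    #{I ∈ (G ×ˢ M).powerset | (∀ g ∈ G, g ∈ A ↔ {g} ×ˢ B ⊆ I) ∧ ∀ m ∈ M \ B, ¬ A ×ˢ {m} ⊆ I} =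
      (2 ^ #B - 1) ^ (#G - #A) * (2 ^ #G - 2 ^ (#G - #A)) ^ (#M - #B) := by
  classical
  let p : α ⊕ β → Finset (α × β) → Prop :=
    Sum.elim (fun g J => g ∈ A ↔ {g} ×ˢ B ⊆ J) (fun m J => ¬ A ×ˢ {m} ⊆ J)
  have blockwise (I : Finset (α × β)) :
      ((∀ g ∈ G, g ∈ A ↔ {g} ×ˢ B ⊆ I) ∧ ∀ m ∈ M \ B, ¬ A ×ˢ {m} ⊆ I) ↔
        ∀ x ∈ G.disjSum (M \ B), p x {z ∈ I | cellBlock B z = x} := by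
    simp only [Sum.forall, inl_mem_disjSum, inr_mem_disjSum, p, Sum.elim_inl, Sum.elim_inr]
    refine and_congr (forall₂_congr fun g _ => ?_) (forall₂_congr fun m hm => ?_) <;>
      rw [subset_filter_iff_of_forall_mem fun z hz => by aesop (add simp cellBlock)]
  calc _ = #{I ∈ (G ×ˢ M).powerset |
          ∀ x ∈ G.disjSum (M \ B), p x {z ∈ I | cellBlock B z = x}} := by
        congr 1
        exact filter_congr fun I _ => blockwise I
    _ = (∏ g ∈ G, if g ∈ A then 1 else 2 ^ #B - 1) *
          ∏ m ∈ M \ B, (2 ^ #G - 2 ^ (#G - #A)) := by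
        rw [card_filter_powerset_forall_fiber _ (fun z => cellBlock_mem_disjSum) p, prod_disjSum]
        congr 1
        · refine prod_congr rfl fun g hg => ?_
          rw [filter_cellBlock_eq_inl hB hg]
          convert card_filter_powerset_iff_superset (g ∈ A) ({g} ×ˢ B) using 1
          · simp only [p, Sum.elim_inl]
            congr
          · rw [card_product, card_singleton, one_mul]
        · refine prod_congr rfl fun m hm => ?_
          rw [filter_cellBlock_eq_inr hm]
          convert card_filter_powerset_not_superset (product_subset_product hA (subset_refl {m}))
            using 1
          · simp only [p, Sum.elim_inr]
            congr
          · simp only [card_product, card_singleton, mul_one]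
    _ = _ := by
      rw [prod_ite, prod_const_one, one_mul, prod_const, prod_const, ← sdiff_eq_filter,
        card_sdiff_of_subset hA, card_sdiff_of_subset hB]

end

theorem isConcept_iff_rows_cols {n : ℕ} {G A B : Finset (Fin n)} {I : Finset (Fin n × Fin n)}
    (hA : A ⊆ G) (hB : B ⊆ Gᶜ) :
    IsConcept n G I A B ↔
      (∀ g ∈ G, g ∈ A ↔ {g} ×ˢ B ⊆ I) ∧ ∀ m ∈ Gᶜ \ B, ¬ A ×ˢ {m} ⊆ I := by
  simp only [IsConcept, extentDeriv, intentDeriv, hA, hB, true_and, Finset.ext_iff, mem_filter,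
    subset_iff, mem_product, mem_singleton, mem_sdiff, Prod.forall, and_imp]
  grind

theorem card_le_sum_numConcepts {n : ℕ} (G : Finset (Fin n)) (a b : ℕ) :
    (#G).choose a * (n - #G).choose b *
        ((2 ^ b - 1) ^ (#G - a) * (2 ^ #G - 2 ^ (#G - a)) ^ (n - #G - b)) ≤
      ∑ I ∈ (G ×ˢ Gᶜ).powerset, numConcepts n G I := by
  have hGc : #Gᶜ = n - #G := by rw [card_compl, Fintype.card_fin]
  let P := G.powersetCard a ×ˢ Gᶜ.powersetCard b
  have card_incidences : ∀ AB ∈ P, #{I ∈ (G ×ˢ Gᶜ).powerset | IsConcept n G I AB.1 AB.2} =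
      (2 ^ b - 1) ^ (#G - a) * (2 ^ #G - 2 ^ (#G - a)) ^ (n - #G - b) := by
    intro AB hAB
    obtain ⟨hA, hB⟩ := mem_product.mp hAB
    obtain ⟨hAG, rfl⟩ := mem_powersetCard.mp hA
    obtain ⟨hBG, rfl⟩ := mem_powersetCard.mp hB
    rw [← hGc]
    convert card_incidences_rows_cols hAG hBG using 3
    exact isConcept_iff_rows_cols hAG hBG
  calc _ = ∑ AB ∈ P, #{I ∈ (G ×ˢ Gᶜ).powerset | IsConcept n G I AB.1 AB.2} := by
        rw [sum_congr rfl card_incidences, sum_const, card_product, card_powersetCard,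
          card_powersetCard, hGc, smul_eq_mul]
    _ = ∑ I ∈ (G ×ˢ Gᶜ).powerset, #{AB ∈ P | IsConcept n G I AB.1 AB.2} :=
        (sum_card_bipartiteAbove_eq_sum_card_bipartiteBelow _).symm
    _ ≤ _ := sum_le_sum fun I _ => card_le_card (filter_subset_filter _ (subset_univ _))

theorem kappa_half {n : ℕ} (G : Finset (Fin n)) {I : Finset (Fin n × Fin n)}
    (hI : I ⊆ G ×ˢ Gᶜ) :
    kappa n (1 / 2) (1 / 2) G I = (1 / 2 : ℝ) ^ (n + #G * (n - #G)) := by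
  have hGc : #Gᶜ = n - #G := by rw [card_compl, Fintype.card_fin]
  have hG : #G ≤ n := by simpa using card_le_univ G
  have hIcard : #I ≤ #G * (n - #G) := by simpa [hGc] using card_le_card hI
  rw [kappa, card_product, hGc, show (1 - 1 / 2 : ℝ) = 1 / 2 by norm_num, ← pow_add, ← pow_add,
    ← pow_add]
  congr 1
  omega

theorem choose_mul_half_pow_le_expectedConcepts (n k a b : ℕ) :
    ((n.choose k * (k.choose a * (n - k).choose b *
        ((2 ^ b - 1) ^ (k - a) * (2 ^ k - 2 ^ (k - a)) ^ (n - k - b))) : ℕ) : ℝ) *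
      (1 / 2 : ℝ) ^ (n + k * (n - k)) ≤ expectedConcepts n (1 / 2) (1 / 2) := by
  have summand_nonneg : ∀ G : Finset (Fin n), ∀ I ∈ (G ×ˢ Gᶜ).powerset,
      0 ≤ (numConcepts n G I : ℝ) * kappa n (1 / 2) (1 / 2) G I := fun G I hI => by
    rw [kappa_half G (mem_powerset.mp hI)]
    positivity
  calc _ = ∑ G ∈ (univ : Finset (Fin n)).powersetCard k,
        (((k.choose a * (n - k).choose b *
          ((2 ^ b - 1) ^ (k - a) * (2 ^ k - 2 ^ (k - a)) ^ (n - k - b))) : ℕ) : ℝ) *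
            (1 / 2 : ℝ) ^ (n + k * (n - k)) := by
        rw [sum_const, card_powersetCard, card_univ, Fintype.card_fin, nsmul_eq_mul,
          Nat.cast_mul, mul_assoc]
    _ ≤ ∑ G ∈ (univ : Finset (Fin n)).powersetCard k,
        ∑ I ∈ (G ×ˢ Gᶜ).powerset, (numConcepts n G I : ℝ) * kappa n (1 / 2) (1 / 2) G I := by
      refine sum_le_sum fun G hG => ?_
      obtain rfl := (mem_powersetCard.mp hG).2
      rw [sum_congr rfl fun I hI => by rw [kappa_half G (mem_powerset.mp hI)], ← sum_mul]
      gcongr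
      exact_mod_cast card_le_sum_numConcepts G a b
    _ ≤ expectedConcepts n (1 / 2) (1 / 2) :=
      sum_le_sum_of_subset_of_nonneg (subset_univ _) fun G _ _ => sum_nonneg (summand_nonneg G)

theorem factorial_eq_choose_mul_choose_mul_choose_mul (a b c d : ℕ) :
    (a + b + c + d).factorial = (a + b + c + d).choose (a + c) * (a + c).choose a *
      (b + d).choose b * (a.factorial * b.factorial * c.factorial * d.factorial) := by
  have h₁ := Nat.choose_mul_factorial_mul_factorial (show a + c ≤ a + b + c + d by omega)
  have h₂ := Nat.choose_mul_factorial_mul_factorial (show a ≤ a + c by omega)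
  have h₃ := Nat.choose_mul_factorial_mul_factorial (show b ≤ b + d by omega)
  rw [show a + b + c + d - (a + c) = b + d by omega] at h₁
  rw [Nat.add_sub_cancel_left] at h₂ h₃
  rw [← h₁, ← h₂, ← h₃]
  ring

theorem half_pow_mul_eq (a b c d : ℕ) :
    (1 / 2 : ℝ) ^ (a + b + c + d + (a + c) * (b + d)) *
        (((2 : ℝ) ^ b - 1) ^ c * ((2 : ℝ) ^ (a + c) - 2 ^ c) ^ d) =
      (1 / 2 : ℝ) ^ (a + c) * (1 / 2 : ℝ) ^ (b + d) * (1 / 2 : ℝ) ^ (a * b) *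
        (1 - (2 : ℝ) ^ (-(a : ℤ))) ^ d * (1 - (2 : ℝ) ^ (-(b : ℤ))) ^ c := by
  have one_sub_inv {x : ℝ} (hx : 0 < x) : 1 - x⁻¹ = (x - 1) / x := by field_simp
  rw [show a + b + c + d + (a + c) * (b + d) = a + c + (b + d) + a * b + b * c + a * d + c * d by
    ring, zpow_neg, zpow_natCast, zpow_neg, zpow_natCast, one_sub_inv (by positivity),
    one_sub_inv (by positivity), show (2 : ℝ) ^ (a + c) - 2 ^ c = 2 ^ c * (2 ^ a - 1) by ring,
    mul_pow]
  simp only [pow_add, pow_mul, div_pow]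
  field_simp
  ring

theorem multinomial_term_le_expectedConcepts {n a b c d : ℕ} (h : a + b + c + d = n) :
    (n.factorial : ℝ) / (a.factorial * b.factorial * c.factorial * d.factorial) *
        ((1 / 2 : ℝ) ^ (a + c) * (1 / 2 : ℝ) ^ (b + d) * (1 / 2 : ℝ) ^ (a * b) *
          (1 - (2 : ℝ) ^ (-(a : ℤ))) ^ d * (1 - (2 : ℝ) ^ (-(b : ℤ))) ^ c) ≤
      expectedConcepts n (1 / 2) (1 / 2) := by
  subst h
  refine le_of_eq_of_le ?_ (choose_mul_half_pow_le_expectedConcepts _ (a + c) a b)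
  rw [show a + b + c + d - (a + c) = b + d by omega, show a + c - a = c by omega,
    show b + d - b = d by omega, ← half_pow_mul_eq, factorial_eq_choose_mul_choose_mul_choose_mul]
  have hpow : 2 ^ c ≤ 2 ^ (a + c) := Nat.pow_le_pow_right two_pos (by omega)
  push_cast [Nat.one_le_two_pow, hpow]
  field_simp

theorem two_mul_le_two_pow (k : ℕ) : 2 * k ≤ 2 ^ k := by
  rcases k with _ | k
  · simp
  · have := Nat.lt_two_pow_self (n := k)
    rw [pow_succ]
    omega

theorem aSeq_le_half (n : ℕ) : aSeq n ≤ n / 2 := by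
  have haSeq : aSeq n = Nat.log 2 n := by
    have := Real.natFloor_logb_natCast 2 n
    rwa [Nat.cast_ofNat, ← Real.log_div_log] at this
  rcases Nat.eq_zero_or_pos n with rfl | hn
  · simp [haSeq]
  · have := (two_mul_le_two_pow (Nat.log 2 n)).trans (Nat.pow_log_le_self 2 hn.ne')
    omega

theorem expected_concepts_ge_tSeq_general (n : ℕ) :
    expectedConcepts n (1 / 2) (1 / 2) ≥ tSeq n := by
  have hsum : aSeq n + bSeq n + cSeq n + cSeq n = n := by
    have := aSeq_le_half n
    simp only [bSeq, cSeq]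
    omega
  exact multinomial_term_le_expectedConcepts hsum

/-- For `K_n ~ κ_{n,1/2,1/2}`, the expected number of formal concepts
is at least the singled-out term: `E[|𝔅(K_n)|] ≥ t_n`. -/
theorem expected_concepts_ge_tSeq (n : ℕ) (hn : 0 < n) :
    expectedConcepts n (1 / 2) (1 / 2) ≥ tSeq n :=
  expected_concepts_ge_tSeq_general n
end
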